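/- arXiv:1301.6585 — 9 statements merged into one kernel-verified Lean document; each statement's English description precedes it below -/
import Mathlib

section
/- Let ν, ν', γ, γ' be probability measures on a measurable space and ε > 0 be such that ν(A) ≥ ε·γ(A) and ν'(A) ≥ ε·γ'(A) for every measurable set A. Then the total variation distance satisfies ‖ν − ν'‖ ≤ 2(1 − ε) + ε‖γ − γ'‖, where ‖μ − μ'‖ := sup over measurable f with |f| ≤ 1 of |μ(f) − μ'(f)|. In particular, if γ = γ', then ‖ν − ν'‖ ≤ 2(1 − ε). -/
/-!
Since `ε γ ≤ ν`, the measure `ν - ε γ` is a nonnegative measure of mass `1 - ε` and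
`ν = (ν - ε γ) + ε γ`; hence `ν(f) = r + ε γ(f)` with `|r| ≤ 1 - ε` whenever `|f| ≤ 1`,
and likewise for `ν'`. Subtracting the two decompositions gives
`|ν(f) - ν'(f)| ≤ 2 (1 - ε) + ε |γ(f) - γ'(f)|`.
-/

open MeasureTheory ENNReal

section

variable {X : Type*} [MeasurableSpace X]

lemma abs_integral_sub_integral_smul_le {ν γ : Measure X} [IsFiniteMeasure ν]
    {c : ℝ≥0∞} (hle : c • γ ≤ ν) {f : X → ℝ}
    (hf : AEStronglyMeasurable f ν) (hb : ∀ x, |f x| ≤ 1) :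
    |(∫ x, f x ∂ν) - c.toReal * ∫ x, f x ∂γ| ≤
      ν.real Set.univ - c.toReal * γ.real Set.univ := by
  have : IsFiniteMeasure (c • γ) := isFiniteMeasure_of_le ν hle
  have hint : ∀ μ : Measure X, μ ≤ ν → IsFiniteMeasure μ → Integrable f μ :=
    fun μ hμ _ => (integrable_const (1 : ℝ)).mono' (hf.mono_measure hμ) (.of_forall hb)
  have hdecomp : ν - c • γ + c • γ = ν := Measure.sub_add_cancel_of_le hle
  have hintegral :
      ∫ x, f x ∂ν = (∫ x, f x ∂(ν - c • γ)) + c.toReal * ∫ x, f x ∂γ := by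
    conv_lhs => rw [← hdecomp]
    rw [integral_add_measure (hint _ Measure.sub_le inferInstance) (hint _ hle inferInstance),
      integral_smul_measure, smul_eq_mul]
  have hmass :
      (ν - c • γ).real Set.univ = ν.real Set.univ - c.toReal * γ.real Set.univ := by
    rw [measureReal_def, Measure.sub_apply .univ hle,
      toReal_sub_of_le (hle _) (measure_ne_top _ _)]
    simp [measureReal_def, toReal_mul]
  rw [hintegral, add_sub_cancel_right, ← hmass, ← Real.norm_eq_abs,
    ← one_mul ((ν - c • γ).real _)]
  exact norm_integral_le_of_norm_le_const (.of_forall hb)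

lemma abs_integral_sub_mul_integral_le_of_minorization {ν γ : Measure X}
    [IsProbabilityMeasure ν] [IsProbabilityMeasure γ] {ε : ℝ} (hε : 0 ≤ ε)
    (hν : ∀ A : Set X, MeasurableSet A → ENNReal.ofReal ε * γ A ≤ ν A) {f : X → ℝ}
    (hf : Measurable f) (hb : ∀ x, |f x| ≤ 1) :
    |(∫ x, f x ∂ν) - ε * ∫ x, f x ∂γ| ≤ 1 - ε := by
  have hle : ENNReal.ofReal ε • γ ≤ ν := Measure.le_iff.2 fun A hA => by simpa using hν A hA
  simpa [toReal_ofReal hε] using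
    abs_integral_sub_integral_smul_le hle hf.aestronglyMeasurable hb

end

/-- Dobrushin-type minorization comparison lemma: if `ν ≥ ε γ` and `ν' ≥ ε γ'`
setwise, then `‖ν − ν'‖ ≤ 2(1−ε) + ε‖γ − γ'‖`; in particular `‖ν − ν'‖ ≤ 2(1−ε)`
when `γ = γ'`.  Total variation is expressed through test functions `|f| ≤ 1`. -/
theorem minorization_comparison {X : Type*} [MeasurableSpace X]
    (ν ν' γ γ' : Measure X)
    [IsProbabilityMeasure ν] [IsProbabilityMeasure ν']
    [IsProbabilityMeasure γ] [IsProbabilityMeasure γ']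
    (ε : ℝ) (hε : 0 < ε)
    (hν : ∀ A : Set X, MeasurableSet A → ENNReal.ofReal ε * γ A ≤ ν A)
    (hν' : ∀ A : Set X, MeasurableSet A → ENNReal.ofReal ε * γ' A ≤ ν' A) :
    (∀ t : ℝ,
      (∀ f : X → ℝ, Measurable f → (∀ x, |f x| ≤ 1) →
        |(∫ x, f x ∂γ) - ∫ x, f x ∂γ'| ≤ t) →
      ∀ f : X → ℝ, Measurable f → (∀ x, |f x| ≤ 1) →
        |(∫ x, f x ∂ν) - ∫ x, f x ∂ν'| ≤ 2 * (1 - ε) + ε * t) ∧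
    (γ = γ' →
      ∀ f : X → ℝ, Measurable f → (∀ x, |f x| ≤ 1) →
        |(∫ x, f x ∂ν) - ∫ x, f x ∂ν'| ≤ 2 * (1 - ε)) := by
  have comparison : ∀ t : ℝ,
      (∀ f : X → ℝ, Measurable f → (∀ x, |f x| ≤ 1) →
        |(∫ x, f x ∂γ) - ∫ x, f x ∂γ'| ≤ t) →
      ∀ f : X → ℝ, Measurable f → (∀ x, |f x| ≤ 1) →
        |(∫ x, f x ∂ν) - ∫ x, f x ∂ν'| ≤ 2 * (1 - ε) + ε * t := by
    intro t ht f hf hb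
    have hr := abs_integral_sub_mul_integral_le_of_minorization hε.le hν hf hb
    have hr' := abs_integral_sub_mul_integral_le_of_minorization hε.le hν' hf hb
    have hγ : |ε * ((∫ x, f x ∂γ) - ∫ x, f x ∂γ')| ≤ ε * t := by
      rw [abs_mul, abs_of_pos hε]
      exact mul_le_mul_of_nonneg_left (ht f hf hb) hε.le
    rw [abs_le] at hr hr' hγ ⊢
    constructor <;> linarith
  refine ⟨comparison, fun hγ f hf hb => ?_⟩
  simpa using comparison 0 (fun g _ _ => by simp [hγ]) f hf hb
end

section
/- Let μ, ν be probability measures on a measurable space and let Λ be a bounded, strictly positive measurable function with 0 < inf Λ ≤ sup Λ < ∞. Define the reweighted measures μ_Λ(A) = ∫_A Λ dμ / ∫ Λ dμ and ν_Λ(A) = ∫_A Λ dν / ∫ Λ dν. Then ‖μ_Λ − ν_Λ‖ ≤ 2 (sup Λ / inf Λ) ‖μ − ν‖, where ‖·‖ denotes the total variation distance ‖ρ − ρ'‖ = sup_{|f|≤1} |ρ(f) − ρ'(f)|. -/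
/-!
Write `A, B` for the integrals of `f Λ` and `Zμ, Zν` for the normalizers. Then
`A / Zμ - B / Zν = ((A - B) - (B / Zν) (Zμ - Zν)) / Zμ`, where `|B / Zν| ≤ 1` because `|f| ≤ 1`
and `Zμ ≥ c`. Both `A - B` and `Zμ - Zν` are differences of integrals of functions bounded by `C`,
so after rescaling by `C` each is at most `C t`.
-/

open MeasureTheory

lemma abs_div_sub_div_le_of_abs_sub_le {a b z w s c : ℝ} (hc : 0 < c) (hcz : c ≤ z) (hw : 0 < w)
    (hbw : |b| ≤ w) (hab : |a - b| ≤ s) (hzw : |z - w| ≤ s) :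
    |a / z - b / w| ≤ 2 * s / c := by
  have hz : 0 < z := hc.trans_le hcz
  have hbw' : |b / w| ≤ 1 := by rwa [abs_div, abs_of_pos hw, div_le_one hw]
  have hs : 0 ≤ s := (abs_nonneg _).trans hab
  have hsplit : a / z - b / w = ((a - b) - b / w * (z - w)) / z := by
    field_simp
    ring
  calc |a / z - b / w| = |(a - b) - b / w * (z - w)| / z := by
        rw [hsplit, abs_div, abs_of_pos hz]
    _ ≤ (|a - b| + |b / w| * |z - w|) / z := by
        gcongr
        exact (abs_sub _ _).trans_eq (by rw [abs_mul])
    _ ≤ (s + 1 * s) / c := by gcongr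
    _ = 2 * s / c := by ring

section

variable {X : Type*} [MeasurableSpace X]

lemma abs_integral_sub_integral_le_of_abs_le {μ ν : Measure X} {t : ℝ}
    (ht : ∀ f : X → ℝ, Measurable f → (∀ x, |f x| ≤ 1) →
      |(∫ x, f x ∂μ) - ∫ x, f x ∂ν| ≤ t)
    {g : X → ℝ} (hg : Measurable g) {M : ℝ} (hM : 0 < M) (hgM : ∀ x, |g x| ≤ M) :
    |(∫ x, g x ∂μ) - ∫ x, g x ∂ν| ≤ M * t := by
  have hscaled := ht (fun x => g x / M) (hg.div_const M) fun x => by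
    rw [abs_div, abs_of_pos hM, div_le_one hM]
    exact hgM x
  rw [integral_div, integral_div, ← sub_div, abs_div, abs_of_pos hM, div_le_iff₀ hM] at hscaled
  linarith

lemma const_le_integral_of_forall_le {ρ : Measure X} [IsProbabilityMeasure ρ] {g : X → ℝ}
    (hg : Integrable g ρ) {c : ℝ} (hcg : ∀ x, c ≤ g x) : c ≤ ∫ x, g x ∂ρ := by
  simpa using integral_mono (integrable_const c) hg hcg

lemma abs_integral_mul_le_integral {ρ : Measure X} {f w : X → ℝ} (hw : Integrable w ρ)
    (hw0 : ∀ x, 0 ≤ w x) (hf : ∀ x, |f x| ≤ 1) : |∫ x, f x * w x ∂ρ| ≤ ∫ x, w x ∂ρ :=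
  norm_integral_le_of_norm_le (f := fun x => f x * w x) hw <| ae_of_all _ fun x => by
    rw [Real.norm_eq_abs, abs_mul, abs_of_nonneg (hw0 x)]
    exact mul_le_of_le_one_left (hw0 x) (hf x)

end

/-- Reweighting lemma: if `c ≤ Λ ≤ C` with `c > 0`, the normalized reweighted
measures satisfy `‖μ_Λ − ν_Λ‖ ≤ 2 (C/c) ‖μ − ν‖` in total variation. -/
theorem reweighting_tv_bound {X : Type*} [MeasurableSpace X]
    (μ ν : Measure X) [IsProbabilityMeasure μ] [IsProbabilityMeasure ν]
    (Λ : X → ℝ) (hΛ : Measurable Λ) (c C : ℝ) (hc : 0 < c)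
    (hbound : ∀ x, c ≤ Λ x ∧ Λ x ≤ C)
    (t : ℝ)
    (ht : ∀ f : X → ℝ, Measurable f → (∀ x, |f x| ≤ 1) →
      |(∫ x, f x ∂μ) - ∫ x, f x ∂ν| ≤ t) :
    ∀ f : X → ℝ, Measurable f → (∀ x, |f x| ≤ 1) →
      |(∫ x, f x * Λ x ∂μ) / (∫ x, Λ x ∂μ) -
        (∫ x, f x * Λ x ∂ν) / (∫ x, Λ x ∂ν)| ≤ 2 * (C / c) * t := by
  intro f hf hf1
  have hΛ0 : ∀ x, 0 ≤ Λ x := fun x => hc.le.trans (hbound x).1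
  have hΛC : ∀ x, |Λ x| ≤ C := fun x => (abs_of_nonneg (hΛ0 x)).trans_le (hbound x).2
  have hfΛC : ∀ x, |f x * Λ x| ≤ C := fun x => by
    rw [abs_mul]
    exact mul_le_of_le_one_left (abs_nonneg _) (hf1 x) |>.trans (hΛC x)
  have hC : 0 < C := by
    obtain ⟨x⟩ := nonempty_of_isProbabilityMeasure μ
    exact hc.trans_le ((hbound x).1.trans (hbound x).2)
  have hΛint : ∀ (ρ : Measure X) [IsProbabilityMeasure ρ], Integrable Λ ρ := fun ρ _ =>
    .of_bound hΛ.aestronglyMeasurable C (ae_of_all _ hΛC)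
  have hZ : ∀ (ρ : Measure X) [IsProbabilityMeasure ρ], c ≤ ∫ x, Λ x ∂ρ := fun ρ _ =>
    const_le_integral_of_forall_le (hΛint ρ) fun x => (hbound x).1
  calc _ ≤ 2 * (C * t) / c :=
        abs_div_sub_div_le_of_abs_sub_le hc (hZ μ) (hc.trans_le (hZ ν))
          (abs_integral_mul_le_integral (hΛint ν) hΛ0 hf1)
          (abs_integral_sub_integral_le_of_abs_le ht (hf.mul hΛ) hC hfΛC)
          (abs_integral_sub_integral_le_of_abs_le ht hΛ hC hΛC)
    _ = 2 * (C / c) * t := by ring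
end

section
/- Under the same hypotheses (finite set I, pseudometric m, nonnegative matrix C with max_i Σ_j e^{m(i,j)} C_{ij} ≤ c < 1, D = Σ_{n≥0} C^n), for every subset J ⊆ I and every i ∈ I one has Σ_{j∈J} D_{ij} ≤ e^{−m(i,J)} / (1−c), where m(i,J) := min_{j∈J} m(i,j). -/
/-!
Write `‖A‖ᵢ := Σ_j e^{m(i,j)} A_{ij}` for the weighted row sums of a nonnegative matrix. The
triangle inequality `e^{m(i,j)} ≤ e^{m(i,k)} e^{m(k,j)}` makes these row sums submultiplicative,
so `‖Cⁿ‖ᵢ ≤ cⁿ`. Since `e^{m(i,j)} ≥ e^{m(i,J)}` for `j ∈ J`, this gives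
`Σ_{j∈J} (Cⁿ)_{ij} ≤ e^{-m(i,J)} cⁿ`, and summing the geometric series yields the bound.
-/

open Finset Real

section WeightedRowSum

variable {ι : Type*} [Fintype ι]

theorem sum_le_exp_neg_inf'_mul {v w : ι → ℝ} {b : ℝ} (hv : ∀ j, 0 ≤ v j)
    (hb : ∑ j, exp (w j) * v j ≤ b) (J : Finset ι) (hJ : J.Nonempty) :
    ∑ j ∈ J, v j ≤ exp (-J.inf' hJ w) * b := by
  have hterm : ∀ j ∈ J, v j ≤ exp (-J.inf' hJ w) * (exp (w j) * v j) := fun j hj => by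
    have hexp : 1 ≤ exp (-J.inf' hJ w) * exp (w j) := by
      rw [← exp_add, one_le_exp_iff]
      linarith [J.inf'_le w hj]
    nlinarith [hv j]
  calc ∑ j ∈ J, v j ≤ ∑ j ∈ J, exp (-J.inf' hJ w) * (exp (w j) * v j) := sum_le_sum hterm
    _ = exp (-J.inf' hJ w) * ∑ j ∈ J, exp (w j) * v j := (mul_sum ..).symm
    _ ≤ exp (-J.inf' hJ w) * ∑ j, exp (w j) * v j := by
        gcongr
        · exact fun j _ _ => mul_nonneg (exp_pos _).le (hv j)
        · exact subset_univ J
    _ ≤ exp (-J.inf' hJ w) * b := by gcongr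

variable {m : ι → ι → ℝ}

theorem weightedRowSum_mul_le (hmtri : ∀ i j k, m i k ≤ m i j + m j k)
    {A B : Matrix ι ι ℝ} (hA : ∀ i j, 0 ≤ A i j) (hB : ∀ i j, 0 ≤ B i j) {b : ℝ}
    (hBb : ∀ k, ∑ j, exp (m k j) * B k j ≤ b) (i : ι) :
    ∑ j, exp (m i j) * (A * B) i j ≤ (∑ k, exp (m i k) * A i k) * b :=
  calc ∑ j, exp (m i j) * (A * B) i j
      ≤ ∑ j, ∑ k, exp (m i k) * A i k * (exp (m k j) * B k j) := by
        refine sum_le_sum fun j _ => ?_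
        rw [Matrix.mul_apply, mul_sum]
        refine sum_le_sum fun k _ => ?_
        have hexp : exp (m i j) ≤ exp (m i k) * exp (m k j) := by
          rw [← exp_add]; exact exp_le_exp.2 (hmtri i k j)
        calc exp (m i j) * (A i k * B k j)
            ≤ exp (m i k) * exp (m k j) * (A i k * B k j) := by
              gcongr; exact mul_nonneg (hA i k) (hB k j)
          _ = exp (m i k) * A i k * (exp (m k j) * B k j) := by ring
    _ = ∑ k, exp (m i k) * A i k * ∑ j, exp (m k j) * B k j := by
        rw [sum_comm]; simp only [mul_sum]
    _ ≤ ∑ k, exp (m i k) * A i k * b :=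
        sum_le_sum fun k _ => mul_le_mul_of_nonneg_left (hBb k) (mul_nonneg (exp_pos _).le (hA i k))
    _ = (∑ k, exp (m i k) * A i k) * b := (sum_mul ..).symm

theorem weightedRowSum_pow_le [DecidableEq ι] (hm0 : ∀ i, m i i = 0)
    (hmtri : ∀ i j k, m i k ≤ m i j + m j k) {C : Matrix ι ι ℝ} (hC : ∀ i j, 0 ≤ C i j)
    {c : ℝ} (hCm : ∀ i, ∑ j, exp (m i j) * C i j ≤ c) (n : ℕ) (i : ι) :
    ∑ j, exp (m i j) * (C ^ n) i j ≤ c ^ n := by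
  induction n generalizing i with
  | zero => simp [Matrix.one_apply, hm0]
  | succ n ih =>
    have hc : 0 ≤ c := (sum_nonneg fun j _ => mul_nonneg (exp_pos _).le (hC i j)).trans (hCm i)
    calc ∑ j, exp (m i j) * (C ^ (n + 1)) i j
        ≤ (∑ k, exp (m i k) * C i k) * c ^ n := by
          rw [pow_succ']
          exact weightedRowSum_mul_le hmtri hC (Matrix.pow_apply_nonneg hC n) ih i
      _ ≤ c * c ^ n := by gcongr; exact hCm i
      _ = c ^ (n + 1) := (pow_succ' c n).symm

end WeightedRowSum

theorem matrix_exp_decay_subset_general {I : Type*} [Fintype I] [DecidableEq I]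
    (m : I → I → ℝ)
    (hm0 : ∀ i, m i i = 0)
    (hmtri : ∀ i j k, m i k ≤ m i j + m j k)
    (C : Matrix I I ℝ) (hC : ∀ i j, 0 ≤ C i j)
    (c : ℝ) (hc : c < 1)
    (hCm : ∀ i, ∑ j, Real.exp (m i j) * C i j ≤ c) :
    ∀ (J : Finset I) (hJ : J.Nonempty) (i : I),
      ∑ j ∈ J, (∑' n : ℕ, (C ^ n) i j) ≤
        Real.exp (-(J.inf' hJ fun j => m i j)) / (1 - c) := by
  intro J hJ i
  have hc0 : 0 ≤ c := (sum_nonneg fun j _ => mul_nonneg (exp_pos _).le (hC i j)).trans (hCm i)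
  have hgeo : Summable (c ^ ·) := summable_geometric_of_lt_one hc0 hc
  have hbound (K : Finset I) (hK : K.Nonempty) (n : ℕ) :
      ∑ j ∈ K, (C ^ n) i j ≤ exp (-K.inf' hK (m i)) * c ^ n :=
    sum_le_exp_neg_inf'_mul (Matrix.pow_apply_nonneg hC n i)
      (weightedRowSum_pow_le hm0 hmtri hC hCm n i) K hK
  have hsummable (j : I) : Summable fun n => (C ^ n) i j :=
    (hgeo.mul_left _).of_nonneg_of_le (fun n => Matrix.pow_apply_nonneg hC n i j)
      fun n => by simpa using hbound {j} (singleton_nonempty j) n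
  calc ∑ j ∈ J, ∑' n, (C ^ n) i j = ∑' n, ∑ j ∈ J, (C ^ n) i j :=
        (Summable.tsum_finsetSum fun j _ => hsummable j).symm
    _ ≤ ∑' n, exp (-J.inf' hJ (m i)) * c ^ n :=
        Summable.tsum_le_tsum (hbound J hJ) (summable_sum fun j _ => hsummable j) (hgeo.mul_left _)
    _ = exp (-J.inf' hJ (m i)) / (1 - c) := by
        rw [tsum_mul_left, tsum_geometric_of_lt_one hc0 hc, div_eq_mul_inv]

/-- Exponential-decay matrix lemma, localized form: under
`max_i Σ_j e^{m(i,j)} C_{ij} ≤ c < 1`, the matrix `D = Σ_n C^n` satisfies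
`Σ_{j∈J} D_{ij} ≤ e^{−m(i,J)}/(1−c)` for every nonempty `J ⊆ I`, where
`m(i,J) = min_{j∈J} m(i,j)`. -/
theorem matrix_exp_decay_subset {I : Type*} [Fintype I] [DecidableEq I]
    (m : I → I → ℝ)
    (hm0 : ∀ i, m i i = 0) (hmsymm : ∀ i j, m i j = m j i)
    (hmtri : ∀ i j k, m i k ≤ m i j + m j k) (hmnonneg : ∀ i j, 0 ≤ m i j)
    (C : Matrix I I ℝ) (hC : ∀ i j, 0 ≤ C i j)
    (c : ℝ) (hc : c < 1)
    (hCm : ∀ i, ∑ j, Real.exp (m i j) * C i j ≤ c) :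
    ∀ (J : Finset I) (hJ : J.Nonempty) (i : I),
      ∑ j ∈ J, (∑' n : ℕ, (C ^ n) i j) ≤
        Real.exp (-(J.inf' hJ fun j => m i j)) / (1 - c) :=
  matrix_exp_decay_subset_general m hm0 hmtri C hC c hc hCm
end

section
/- Let μ be a probability measure on a measurable space S, let X_1, …, X_N be i.i.d. random variables with law μ, and let μ̂ = (1/N) Σ_{k=1}^N δ_{X_k} be the empirical measure. Then for every d ≥ 1 and every measurable function f : S^d → ℝ with |f| ≤ 1, one has E[|μ^{⊗d}(f) − μ̂^{⊗d}(f)|²]^{1/2} ≤ 4d/√N. -/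
/-!
Centre `f` at `c = μ^{⊗d}(f)`: the error is `N^{-d} ∑_k g(X_{k_1}, …, X_{k_d})` with `g = f - c`,
`|g| ≤ 2` and `μ^{⊗d}(g) = 0`. Expanding the square gives a sum over pairs of index tuples, i.e.
over maps `m : Fin d ⊕ Fin d → Fin N`. For injective `m` the two factors are independent with
mean zero, so the term vanishes. Every other term is at most `4`, and a non-injective `m`
has a collision `m a = m b` for one of fewer than `(2d)²` pairs `(a, b)`, so there are at most
`(2d)² N^{2d-1}` of them. Hence the second moment is at most `16 d² / N`.
-/

open MeasureTheory ProbabilityTheory Finset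

section Counting

variable {α β : Type*} [Fintype α] [DecidableEq α] [Fintype β] [DecidableEq β]

/-- `(m, y) ↦ update m b y` is injective on the pairs with `m a = m b`. -/
theorem card_filter_apply_eq_apply_mul_le {a b : α} (hab : a ≠ b) :
    #{m : α → β | m a = m b} * Fintype.card β ≤ Fintype.card β ^ Fintype.card α := by
  rw [← Fintype.card_fun, ← card_univ (α := α → β), ← card_univ (α := β), ← card_product]
  refine card_le_card_of_injOn (fun p => Function.update p.1 b p.2) (by simp) ?_
  rintro ⟨m, y⟩ hm ⟨m', y'⟩ hm' hupdate
  simp only [coe_product, coe_filter, mem_univ, true_and, Set.mem_prod, Set.mem_ofPred_eq,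
    coe_univ, Set.mem_univ, and_true] at hm hm'
  have hy : y = y' := by simpa using congrFun hupdate b
  have hrest : ∀ x, x ≠ b → m x = m' x := fun x hx => by
    simpa [Function.update_of_ne hx] using congrFun hupdate x
  refine Prod.ext (funext fun x => ?_) hy
  by_cases hx : x = b
  · change m x = m' x
    rw [hx, ← hm, ← hm', hrest a hab]
  · exact hrest x hx

theorem card_filter_not_injective_mul_le :
    #{m : α → β | ¬ m.Injective} * Fintype.card β ≤
      Fintype.card α ^ 2 * Fintype.card β ^ Fintype.card α := by
  have hcover : ({m : α → β | ¬ m.Injective} : Finset _) ⊆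
      (univ : Finset α).offDiag.biUnion fun q => {m : α → β | m q.1 = m q.2} := by
    intro m hm
    obtain ⟨a, b, hab, hne⟩ := Function.not_injective_iff.1 (mem_filter.1 hm).2
    exact mem_biUnion.2 ⟨(a, b), by simpa using hne, by simpa using hab⟩
  calc #{m : α → β | ¬ m.Injective} * Fintype.card β
      ≤ ∑ q ∈ (univ : Finset α).offDiag, #{m : α → β | m q.1 = m q.2} * Fintype.card β := by
        rw [← sum_mul]
        exact Nat.mul_le_mul_right _ ((card_le_card hcover).trans card_biUnion_le)
    _ ≤ ∑ _q ∈ (univ : Finset α).offDiag, Fintype.card β ^ Fintype.card α :=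
        sum_le_sum fun q hq => card_filter_apply_eq_apply_mul_le (mem_offDiag.1 hq).2.2
    _ ≤ Fintype.card α ^ 2 * Fintype.card β ^ Fintype.card α := by
        rw [sum_const, smul_eq_mul, offDiag_card, card_univ, sq]
        exact Nat.mul_le_mul_right _ (Nat.sub_le _ _)

end Counting

theorem sq_sum_eq_sum_comp_inl_mul_comp_inr {ι β R : Type*} [Fintype ι] [DecidableEq ι]
    [Fintype β] [CommSemiring R] (F : (ι → β) → R) :
    (∑ k, F k) ^ 2 = ∑ m : ι ⊕ ι → β, F (m ∘ Sum.inl) * F (m ∘ Sum.inr) := by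
  rw [sq, sum_mul_sum, ← Fintype.sum_prod_type']
  exact ((Equiv.sumArrowEquivProdArrow ι ι β).sum_comp fun p => F p.1 * F p.2).symm

theorem integral_pi_comp_inl_mul_comp_inr {S ι κ : Type*} [MeasurableSpace S] [Fintype ι]
    [Fintype κ] (μ : Measure S) [SigmaFinite μ] (g : (ι → S) → ℝ) (h : (κ → S) → ℝ) :
    ∫ y, g (y ∘ Sum.inl) * h (y ∘ Sum.inr) ∂Measure.pi (fun _ => μ) =
      (∫ y, g y ∂Measure.pi (fun _ => μ)) * ∫ y, h y ∂Measure.pi (fun _ => μ) := by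
  rw [← integral_prod_mul,
    ← (measurePreserving_sumPiEquivProdPi fun _ : ι ⊕ κ => μ).integral_comp
      (MeasurableEquiv.measurableEmbedding _)]
  rfl

section IID

variable {Ω S J : Type*} [MeasurableSpace Ω] [MeasurableSpace S] {P : Measure Ω}
  {μ : Measure S} {X : J → Ω → S}

theorem integral_comp_injective_eq_integral_pi {ι : Type*} [Fintype ι]
    (hmeas : ∀ j, Measurable (X j)) (hindep : iIndepFun X P) (hlaw : ∀ j, P.map (X j) = μ)
    {k : ι → J} (hk : k.Injective) {G : (ι → S) → ℝ}
    (hG : AEStronglyMeasurable G (Measure.pi fun _ => μ)) :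
    ∫ ω, G (fun i => X (k i) ω) ∂P = ∫ y, G y ∂Measure.pi (fun _ => μ) := by
  have hjoint := (hindep.precomp hk).map_fun_eq_pi_map fun i => (hmeas (k i)).aemeasurable
  simp only [hlaw] at hjoint
  rw [← hjoint] at hG ⊢
  exact (integral_map (measurable_pi_lambda _ fun i => hmeas (k i)).aemeasurable hG).symm

theorem integral_comp_inl_mul_comp_inr_eq_zero {ι : Type*} [Fintype ι]
    [SigmaFinite μ] (hmeas : ∀ j, Measurable (X j)) (hindep : iIndepFun X P)
    (hlaw : ∀ j, P.map (X j) = μ) {m : ι ⊕ ι → J} (hm : m.Injective)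
    {g : (ι → S) → ℝ} (hg : Measurable g)
    (hg0 : ∫ y, g y ∂Measure.pi (fun _ => μ) = 0) :
    ∫ ω, g (fun i => X (m (.inl i)) ω) * g (fun i => X (m (.inr i)) ω) ∂P = 0 := by
  have hG : Measurable fun y : ι ⊕ ι → S => g (y ∘ Sum.inl) * g (y ∘ Sum.inr) := by fun_prop
  have h := integral_comp_injective_eq_integral_pi hmeas hindep hlaw hm hG.aestronglyMeasurable
  rwa [integral_pi_comp_inl_mul_comp_inr, hg0, mul_zero] at h

theorem integral_sq_sum_comp_mul_card_le [IsProbabilityMeasure P] [SigmaFinite μ]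
    [Fintype J] [DecidableEq J] {ι : Type*} [Fintype ι] [DecidableEq ι]
    (hmeas : ∀ j, Measurable (X j)) (hindep : iIndepFun X P) (hlaw : ∀ j, P.map (X j) = μ)
    {g : (ι → S) → ℝ} (hg : Measurable g) {C : ℝ} (hgC : ∀ y, |g y| ≤ C)
    (hg0 : ∫ y, g y ∂Measure.pi (fun _ => μ) = 0) :
    (∫ ω, (∑ k : ι → J, g (fun i => X (k i) ω)) ^ 2 ∂P) * Fintype.card J ≤
      C ^ 2 * (2 * Fintype.card ι) ^ 2 * Fintype.card J ^ (2 * Fintype.card ι) := by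
  set T : (ι ⊕ ι → J) → Ω → ℝ :=
    fun m ω => g (fun i => X (m (.inl i)) ω) * g (fun i => X (m (.inr i)) ω)
  have hTC m ω : |T m ω| ≤ C ^ 2 := by
    rw [abs_mul, sq]
    exact mul_le_mul (hgC _) (hgC _) (abs_nonneg _)
      ((abs_nonneg _).trans (hgC fun i => X (m (.inl i)) ω))
  have hT_le m : ∫ ω, T m ω ∂P ≤ C ^ 2 := by
    have h := norm_integral_le_of_norm_le_const (μ := P) (f := T m) (.of_forall (hTC m))
    simpa using (le_abs_self _).trans h
  have hint m : Integrable (T m) P :=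
    .of_bound (by fun_prop) (C ^ 2) (.of_forall fun ω => hTC m ω)
  have hcount := card_filter_not_injective_mul_le (α := ι ⊕ ι) (β := J)
  rw [Fintype.card_sum, ← two_mul] at hcount
  calc (∫ ω, (∑ k : ι → J, g (fun i => X (k i) ω)) ^ 2 ∂P) * Fintype.card J
      = (∑ m : ι ⊕ ι → J, ∫ ω, T m ω ∂P) * Fintype.card J := by
        simp_rw [sq_sum_eq_sum_comp_inl_mul_comp_inr]
        exact congrArg (· * _) (integral_finsetSum _ fun m _ => hint m)
    _ = (∑ m with ¬ m.Injective, ∫ ω, T m ω ∂P) * Fintype.card J := by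
        rw [sum_filter_of_ne fun m _ hm =>
          mt (integral_comp_inl_mul_comp_inr_eq_zero hmeas hindep hlaw · hg hg0) hm]
    _ ≤ (#{m : ι ⊕ ι → J | ¬ m.Injective} * C ^ 2) * Fintype.card J := by
        gcongr
        exact (sum_le_card_nsmul _ _ _ fun m _ => hT_le m).trans_eq (nsmul_eq_mul _ _)
    _ = C ^ 2 * ((#{m : ι ⊕ ι → J | ¬ m.Injective} * Fintype.card J : ℕ) : ℝ) := by
        push_cast
        ring
    _ ≤ C ^ 2 * (((2 * Fintype.card ι) ^ 2 * Fintype.card J ^ (2 * Fintype.card ι) : ℕ) : ℝ) :=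
        by gcongr
    _ = C ^ 2 * (2 * Fintype.card ι) ^ 2 * Fintype.card J ^ (2 * Fintype.card ι) := by
        push_cast
        ring

end IID

theorem empirical_product_L2_bound_general {S : Type*} [MeasurableSpace S]
    {Ω : Type*} [MeasurableSpace Ω] (P : Measure Ω) [IsProbabilityMeasure P]
    (μ : Measure S) [IsProbabilityMeasure μ]
    (N : ℕ) (hN : 0 < N)
    (X : Fin N → Ω → S) (hmeas : ∀ k, Measurable (X k))
    (hindep : iIndepFun X P)
    (hlaw : ∀ k, P.map (X k) = μ)
    (d : ℕ)
    (f : (Fin d → S) → ℝ) (hf : Measurable f) (hfb : ∀ x, |f x| ≤ 1) :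
    Real.sqrt (∫ ω,
        |(∫ x, f x ∂(Measure.pi fun _ : Fin d => μ)) -
          (N : ℝ)⁻¹ ^ d * ∑ k : Fin d → Fin N, f (fun i => X (k i) ω)| ^ 2 ∂P)
      ≤ 4 * d / Real.sqrt N := by
  set c := ∫ x, f x ∂(Measure.pi fun _ : Fin d => μ)
  have hcb : |c| ≤ 1 := by
    simpa using norm_integral_le_of_norm_le_const (μ := Measure.pi fun _ : Fin d => μ) (f := f)
      (.of_forall fun x => by simpa using hfb x)
  have hcentered : ∫ x, (f x - c) ∂(Measure.pi fun _ : Fin d => μ) = 0 := by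
    rw [integral_sub (.of_bound hf.aestronglyMeasurable 1 (.of_forall hfb)) (integrable_const c)]
    simp [c]
  have hvar : (∫ ω, (∑ k : Fin d → Fin N, (f (fun i => X (k i) ω) - c)) ^ 2 ∂P) * N ≤
      2 ^ 2 * (2 * d) ^ 2 * N ^ (2 * d) := by
    simpa using integral_sq_sum_comp_mul_card_le hmeas hindep hlaw (hf.sub measurable_const)
      (g := fun x => f x - c) (fun y => (abs_sub _ _).trans (by linarith [hfb y])) hcentered
  have hNpos : (0 : ℝ) < N := by exact_mod_cast hN
  have hpointwise ω : |c - (N : ℝ)⁻¹ ^ d * ∑ k : Fin d → Fin N, f (fun i => X (k i) ω)| ^ 2 =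
      ((N : ℝ) ^ d)⁻¹ ^ 2 * (∑ k : Fin d → Fin N, (f (fun i => X (k i) ω) - c)) ^ 2 := by
    rw [sum_sub_distrib, sum_const, card_univ, Fintype.card_fun, Fintype.card_fin,
      Fintype.card_fin, nsmul_eq_mul, sq_abs, ← mul_pow, inv_pow]
    push_cast
    field_simp
    ring
  have hmean_sq :
      ∫ ω, |c - (N : ℝ)⁻¹ ^ d * ∑ k : Fin d → Fin N, f (fun i => X (k i) ω)| ^ 2 ∂P ≤
        (4 * d / Real.sqrt N) ^ 2 := by
    simp only [hpointwise, integral_const_mul]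
    rw [div_pow, Real.sq_sqrt hNpos.le, le_div_iff₀ hNpos, mul_assoc]
    calc _ ≤ ((N : ℝ) ^ d)⁻¹ ^ 2 * (2 ^ 2 * (2 * d) ^ 2 * N ^ (2 * d)) := by gcongr
      _ = (4 * d) ^ 2 := by
        field_simp
        ring
  exact (Real.sqrt_le_left (by positivity)).2 hmean_sq

/-- L² bound for products of empirical measures: if `X_1,…,X_N` are i.i.d. with
law `μ` and `μ̂` is the empirical measure, then for every measurable `|f| ≤ 1` on
`S^d`, `E[|μ^{⊗d}(f) − μ̂^{⊗d}(f)|²]^{1/2} ≤ 4d/√N`. -/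
theorem empirical_product_L2_bound {S : Type*} [MeasurableSpace S]
    {Ω : Type*} [MeasurableSpace Ω] (P : Measure Ω) [IsProbabilityMeasure P]
    (μ : Measure S) [IsProbabilityMeasure μ]
    (N : ℕ) (hN : 0 < N)
    (X : Fin N → Ω → S) (hmeas : ∀ k, Measurable (X k))
    (hindep : iIndepFun X P)
    (hlaw : ∀ k, P.map (X k) = μ)
    (d : ℕ) (hd : 1 ≤ d)
    (f : (Fin d → S) → ℝ) (hf : Measurable f) (hfb : ∀ x, |f x| ≤ 1) :
    Real.sqrt (∫ ω,
        |(∫ x, f x ∂(Measure.pi fun _ : Fin d => μ)) -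
          (N : ℝ)⁻¹ ^ d * ∑ k : Fin d → Fin N, f (fun i => X (k i) ω)| ^ 2 ∂P)
      ≤ 4 * d / Real.sqrt N :=
  empirical_product_L2_bound_general P μ N hN X hmeas hindep hlaw d f hf hfb
end

section
/- In the setting of the previous statement (μ a probability measure, μ̂ the empirical measure of N i.i.d. samples, d ≥ 1, |f| ≤ 1, N ≥ d²), the variance bound Var[μ̂^{⊗d}(f)] ≤ 4(1 − (1 − d/N)^d) ≤ 4d²/N holds. -/
open MeasureTheory ProbabilityTheory Finset

/-!
Expand the variance of `∑ₖ f(X_{k₁}, …, X_{k_d})` into the covariances `cov(f(X_k), f(X_{k'}))`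
over pairs of index tuples. By independence such a covariance vanishes as soon as `k` and `k'`
share no index, and it is at most `4` since `|f| ≤ 1`. For fixed `k`, at most
`N^d - (N - d)^d` tuples `k'` meet the `≤ d` indices of `k`, so the variance of `μ̂^{⊗d}(f)` is at
most `N^{-2d} · N^d · 4 (N^d - (N - d)^d) = 4 (1 - (1 - d/N)^d)`, which Bernoulli's inequality
bounds by `4 d² / N`.
-/
lemma Finset.card_filter_not_disjoint_image_le {α β ι : Type*} [Fintype α] [Fintype β]
    [Fintype ι] [DecidableEq ι] [DecidableEq β] (k : α → ι) :
    #{k' : β → ι | ¬Disjoint (univ.image k) (univ.image k')} ≤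
      Fintype.card ι ^ Fintype.card β - (Fintype.card ι - Fintype.card α) ^ Fintype.card β := by
  have hdisj : ({k' : β → ι | ¬Disjoint (univ.image k) (univ.image k')} : Finset _) =
      (Fintype.piFinset fun _ : β => (univ.image k)ᶜ)ᶜ := by
    ext k'
    simp [Finset.disjoint_right]
  rw [hdisj, card_compl, Fintype.card_fun, Fintype.card_piFinset, prod_const, card_univ]
  gcongr
  rw [card_compl]
  exact Nat.sub_le_sub_left (card_image_le.trans_eq card_univ) _

namespace ProbabilityTheory

variable {Ω : Type*} {mΩ : MeasurableSpace Ω} {P : Measure Ω}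

lemma abs_covariance_le_of_bounded [IsProbabilityMeasure P] {X Y : Ω → ℝ} {a b : ℝ}
    (hX : ∀ᵐ ω ∂P, |X ω| ≤ a) (hY : ∀ᵐ ω ∂P, |Y ω| ≤ b) :
    |cov[X, Y; P]| ≤ 4 * a * b := by
  have hEX : |P[X]| ≤ a := by
    simpa using norm_integral_le_of_norm_le_const (μ := P) (f := X) hX
  have hEY : |P[Y]| ≤ b := by
    simpa using norm_integral_le_of_norm_le_const (μ := P) (f := Y) hY
  have hXY : ∀ᵐ ω ∂P, ‖(X ω - P[X]) * (Y ω - P[Y])‖ ≤ 4 * a * b := by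
    filter_upwards [hX, hY] with ω hXω hYω
    rw [Real.norm_eq_abs, abs_mul]
    have hXc : |X ω - P[X]| ≤ 2 * a := (abs_sub _ _).trans (by linarith)
    have hYc : |Y ω - P[Y]| ≤ 2 * b := (abs_sub _ _).trans (by linarith)
    nlinarith [abs_nonneg (X ω - P[X]), abs_nonneg (Y ω - P[Y])]
  simpa [covariance] using norm_integral_le_of_norm_le_const hXY

lemma iIndepFun.indepFun_comp_of_disjoint_image {ι S α β γ δ : Type*} [MeasurableSpace S]
    [MeasurableSpace γ] [MeasurableSpace δ] [Fintype α] [Fintype β] [DecidableEq ι]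
    {X : ι → Ω → S} (hindep : iIndepFun X P) (hX : ∀ i, Measurable (X i))
    {k : α → ι} {k' : β → ι} (hkk' : Disjoint (univ.image k) (univ.image k'))
    {φ : (α → S) → γ} {ψ : (β → S) → δ} (hφ : Measurable φ) (hψ : Measurable ψ) :
    IndepFun (fun ω => φ fun i => X (k i) ω) (fun ω => ψ fun j => X (k' j) ω) P := by
  let φ' : (univ.image k → S) → γ := fun v => φ fun i => v ⟨k i, by simp⟩
  let ψ' : (univ.image k' → S) → δ := fun v => ψ fun j => v ⟨k' j, by simp⟩
  have hφ' : Measurable φ' := hφ.comp (measurable_pi_lambda _ fun _ => measurable_pi_apply _)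
  have hψ' : Measurable ψ' := hψ.comp (measurable_pi_lambda _ fun _ => measurable_pi_apply _)
  exact (hindep.indepFun_finset _ _ hkk' hX).comp hφ' hψ'

theorem variance_sum_comp_tuples_le {ι S α : Type*} [MeasurableSpace S] [Fintype ι] [Fintype α]
    [DecidableEq α] [IsProbabilityMeasure P] {X : ι → Ω → S} (hindep : iIndepFun X P)
    (hX : ∀ i, Measurable (X i)) {f : (α → S) → ℝ} (hf : Measurable f)
    (hfb : ∀ x, |f x| ≤ 1) :
    Var[fun ω => ∑ k : α → ι, f (fun i => X (k i) ω); P] ≤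
      4 * Fintype.card ι ^ Fintype.card α * (Fintype.card ι ^ Fintype.card α -
        (Fintype.card ι - Fintype.card α : ℕ) ^ Fintype.card α) := by
  classical
  set n := Fintype.card ι
  set d := Fintype.card α
  let g : (α → ι) → Ω → ℝ := fun k ω => f fun i => X (k i) ω
  have hg : ∀ k, Measurable (g k) := fun k => hf.comp (measurable_pi_lambda _ fun i => hX (k i))
  have hgb : ∀ k, ∀ᵐ ω ∂P, |g k ω| ≤ 1 := fun k => ae_of_all _ fun ω => hfb _
  have hcov : ∀ k k', cov[g k, g k'; P] ≤
      if ¬Disjoint (univ.image k) (univ.image k') then 4 else 0 := by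
    intro k k'
    by_cases hkk' : Disjoint (univ.image k) (univ.image k')
    · rw [if_neg (not_not_intro hkk')]
      exact ((hindep.indepFun_comp_of_disjoint_image hX hkk' hf hf).covariance_eq_zero
        (MemLp.of_bound (hg k).aestronglyMeasurable 1 (hgb k))
        (MemLp.of_bound (hg k').aestronglyMeasurable 1 (hgb k'))).le
    · rw [if_pos hkk']
      simpa using (le_abs_self _).trans (abs_covariance_le_of_bounded (hgb k) (hgb k'))
  have hbad : ∀ k : α → ι, (#{k' : α → ι | ¬Disjoint (univ.image k) (univ.image k')} : ℝ) ≤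
      n ^ d - (n - d : ℕ) ^ d := by
    intro k
    rw [← Nat.cast_pow, ← Nat.cast_pow, ← Nat.cast_sub (Nat.pow_le_pow_left (n.sub_le d) d)]
    exact_mod_cast card_filter_not_disjoint_image_le k
  rw [variance_fun_sum fun k => MemLp.of_bound (hg k).aestronglyMeasurable 1 (hgb k)]
  calc ∑ k, ∑ k', cov[g k, g k'; P]
      ≤ ∑ k : α → ι, ∑ k' : α → ι, if ¬Disjoint (univ.image k) (univ.image k') then 4 else 0 :=
        sum_le_sum fun k _ => sum_le_sum fun k' _ => hcov k k'
    _ = ∑ k : α → ι, 4 * (#{k' : α → ι | ¬Disjoint (univ.image k) (univ.image k')} : ℝ) := by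
        simp only [← sum_filter, sum_const, nsmul_eq_mul, mul_comm]
    _ ≤ ∑ k : α → ι, 4 * ((n : ℝ) ^ d - (n - d : ℕ) ^ d) := by
        gcongr with k; exact hbad k
    _ = _ := by
        rw [sum_const, card_univ, Fintype.card_fun, nsmul_eq_mul]
        push_cast
        ring

end ProbabilityTheory

lemma one_sub_one_sub_pow_le {x : ℝ} (hx : x ≤ 2) (n : ℕ) : 1 - (1 - x) ^ n ≤ n * x := by
  have := one_add_mul_le_pow (a := -x) (by linarith) n
  rw [← sub_eq_add_neg] at this
  linarith

lemma inv_pow_sq_mul_sub_pow_eq {N d : ℕ} (hdN : d ≤ N) :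
    ((N : ℝ)⁻¹ ^ d) ^ 2 * (N ^ d * (N ^ d - ((N - d : ℕ) : ℝ) ^ d)) = 1 - (1 - d / N) ^ d := by
  rcases N.eq_zero_or_pos with rfl | hN
  · obtain rfl : d = 0 := by omega
    simp
  · rw [Nat.cast_sub hdN, one_sub_div (by positivity), div_pow, inv_pow, sq]
    field_simp

theorem empirical_product_variance_bound_general {S : Type*} [MeasurableSpace S]
    {Ω : Type*} [MeasurableSpace Ω] (P : Measure Ω) [IsProbabilityMeasure P]
    (N : ℕ)
    (X : Fin N → Ω → S) (hmeas : ∀ k, Measurable (X k))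
    (hindep : iIndepFun X P)
    (d : ℕ) (hNd : d ^ 2 ≤ N)
    (f : (Fin d → S) → ℝ) (hf : Measurable f) (hfb : ∀ x, |f x| ≤ 1) :
    variance (fun ω => (N : ℝ)⁻¹ ^ d * ∑ k : Fin d → Fin N, f (fun i => X (k i) ω)) P
        ≤ 4 * (1 - (1 - (d : ℝ) / N) ^ d) ∧
      4 * (1 - (1 - (d : ℝ) / N) ^ d) ≤ 4 * d ^ 2 / N := by
  have hdN : d ≤ N := (Nat.le_self_pow two_ne_zero d).trans hNd
  constructor
  · rw [variance_const_mul, ← inv_pow_sq_mul_sub_pow_eq hdN, mul_left_comm]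
    gcongr
    simpa [mul_assoc] using variance_sum_comp_tuples_le hindep hmeas hf hfb
  · have hdN' : (d : ℝ) / N ≤ 1 := div_le_one_of_le₀ (by exact_mod_cast hdN) N.cast_nonneg
    calc 4 * (1 - (1 - (d : ℝ) / N) ^ d) ≤ 4 * (d * (d / N)) := by
          gcongr; exact one_sub_one_sub_pow_le (by linarith) d
      _ = 4 * d ^ 2 / N := by ring

/-- Variance bound for the product empirical measure:
`Var[μ̂^{⊗d}(f)] ≤ 4(1 − (1 − d/N)^d) ≤ 4d²/N` for `|f| ≤ 1` and `N ≥ d²`. -/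
theorem empirical_product_variance_bound {S : Type*} [MeasurableSpace S]
    {Ω : Type*} [MeasurableSpace Ω] (P : Measure Ω) [IsProbabilityMeasure P]
    (μ : Measure S) [IsProbabilityMeasure μ]
    (N : ℕ) (hN : 0 < N)
    (X : Fin N → Ω → S) (hmeas : ∀ k, Measurable (X k))
    (hindep : iIndepFun X P)
    (hlaw : ∀ k, P.map (X k) = μ)
    (d : ℕ) (hd : 1 ≤ d) (hNd : d ^ 2 ≤ N)
    (f : (Fin d → S) → ℝ) (hf : Measurable f) (hfb : ∀ x, |f x| ≤ 1) :
    variance (fun ω => (N : ℝ)⁻¹ ^ d * ∑ k : Fin d → Fin N, f (fun i => X (k i) ω)) P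
        ≤ 4 * (1 - (1 - (d : ℝ) / N) ^ d) ∧
      4 * (1 - (1 - (d : ℝ) / N) ^ d) ≤ 4 * d ^ 2 / N :=
  empirical_product_variance_bound_general P N X hmeas hindep d hNd f hf hfb
end

section
/- Let μ be a probability measure, μ̂ the empirical measure of N i.i.d. samples from μ, d ≥ 1 with N ≥ d², and f measurable with |f| ≤ 1. Then the bias of the product empirical measure satisfies |E[μ̂^{⊗d}(f)] − μ^{⊗d}(f)| ≤ 2(1 − N!/((N−d)! N^d)) ≤ 2(1 − (1 − d/N)^d) ≤ 2d²/N. -/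
open MeasureTheory ProbabilityTheory Finset

/-!
Expanding `μ̂^{⊗d}(f)` gives the average of `f (X_{k 1}, …, X_{k d})` over all `N ^ d` index
tuples `k`. For an injective `k` the samples `X_{k i}` are independent with law `μ`, so that term
has expectation exactly `μ^{⊗d}(f)`; there are `N! / (N - d)!` such tuples, and each of the
remaining ones moves the average by at most `2 / N ^ d`. The last two bounds are elementary:
`N! / (N - d)! ≥ (N - d) ^ d` and Bernoulli's inequality.
-/

theorem abs_inv_card_mul_sum_sub_le {α : Type*} [Fintype α] [Nonempty α] {p : α → Prop}
    [DecidablePred p] {g : α → ℝ} {c C : ℝ} (hg : ∀ x, |g x| ≤ C) (hc : |c| ≤ C)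
    (hgc : ∀ x, p x → g x = c) :
    |(Fintype.card α : ℝ)⁻¹ * ∑ x, g x - c|
      ≤ 2 * C * (1 - #{x | p x} / Fintype.card α) := by
  have hA : (0 : ℝ) < Fintype.card α := by exact_mod_cast Fintype.card_pos
  have hsplit : (Fintype.card α : ℝ)⁻¹ * ∑ x, g x - c
      = (Fintype.card α : ℝ)⁻¹ * ∑ x with ¬p x, (g x - c) := by
    rw [sum_filter_of_ne (p := fun x => ¬p x) fun x _ hx hpx => hx (by rw [hgc x hpx, sub_self]),
      sum_sub_distrib, sum_const, card_univ, nsmul_eq_mul]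
    field_simp
  have hbad : |∑ x with ¬p x, (g x - c)| ≤ 2 * C * #{x | ¬p x} := by
    calc |∑ x with ¬p x, (g x - c)| ≤ ∑ x with ¬p x, |g x - c| := abs_sum_le_sum_abs _ _
      _ ≤ ∑ x with ¬p x, 2 * C :=
        sum_le_sum fun x _ => (abs_sub _ _).trans (by linarith [hg x])
      _ = 2 * C * #{x | ¬p x} := by rw [sum_const, nsmul_eq_mul, mul_comm]
  have hcount : (#{x | ¬p x} : ℝ) = Fintype.card α - #{x | p x} := by
    rw [eq_sub_iff_add_eq, ← Nat.cast_add, add_comm, card_filter_add_card_filter_not, card_univ]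
  rw [hsplit, abs_mul, abs_of_pos (inv_pos.2 hA)]
  calc (Fintype.card α : ℝ)⁻¹ * |∑ x with ¬p x, (g x - c)|
      ≤ (Fintype.card α : ℝ)⁻¹ * (2 * C * (Fintype.card α - #{x | p x})) := by
        rw [← hcount]
        gcongr
    _ = 2 * C * (1 - #{x | p x} / Fintype.card α) := by
        field_simp

theorem card_filter_injective_fin (d N : ℕ) :
    #{k : Fin d → Fin N | Function.Injective k} = N.descFactorial d := by
  rw [← Fintype.card_subtype, Fintype.card_congr (Equiv.subtypeInjectiveEquivEmbedding _ _)]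
  simp [Fintype.card_embedding_eq]

theorem Nat.factorial_div_factorial_sub_mul_eq {N d : ℕ} (h : d ≤ N) (x : ℝ) :
    (N.factorial : ℝ) / ((N - d).factorial * x) = N.descFactorial d / x := by
  rw [← Nat.factorial_mul_descFactorial h, Nat.cast_mul,
    mul_div_mul_left _ _ (by positivity)]

theorem one_sub_div_pow_le_descFactorial_div_pow {N d : ℕ} (h : d ≤ N) :
    (1 - (d : ℝ) / N) ^ d ≤ N.descFactorial d / (N : ℝ) ^ d := by
  rcases N.eq_zero_or_pos with rfl | hN
  · obtain rfl : d = 0 := Nat.le_zero.1 h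
    simp
  have hpow : (N - d) ^ d ≤ N.descFactorial d :=
    (Nat.pow_le_pow_left (by omega) d).trans (Nat.pow_sub_le_descFactorial N d)
  rw [one_sub_div (by positivity), div_pow, ← Nat.cast_sub h]
  gcongr
  exact_mod_cast hpow

theorem one_sub_one_sub_div_pow_le {N d : ℕ} (h : d ≤ N) :
    1 - (1 - (d : ℝ) / N) ^ d ≤ d ^ 2 / N := by
  have hdN : (d : ℝ) / N ≤ 1 := div_le_one_of_le₀ (by exact_mod_cast h) (Nat.cast_nonneg N)
  have bernoulli := one_add_mul_le_pow (a := -((d : ℝ) / N)) (by linarith) d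
  rw [← sub_eq_add_neg] at bernoulli
  rw [sq, mul_div_assoc]
  linarith

theorem abs_integral_le_of_abs_le {α : Type*} [MeasurableSpace α] {ν : Measure α}
    [IsProbabilityMeasure ν] {g : α → ℝ} {C : ℝ} (h : ∀ x, |g x| ≤ C) :
    |∫ x, g x ∂ν| ≤ C := by
  simpa using norm_integral_le_of_norm_le_const (μ := ν) (f := g) (.of_forall h)

section Sampling

variable {Ω S ι κ : Type*} [MeasurableSpace Ω] [MeasurableSpace S] {P : Measure Ω}
  [IsProbabilityMeasure P] {μ : Measure S} {X : ι → Ω → S}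

theorem ProbabilityTheory.iIndepFun.map_comp_injective_eq_pi [Fintype κ]
    (hindep : iIndepFun X P) (hX : ∀ i, AEMeasurable (X i) P) (hlaw : ∀ i, P.map (X i) = μ)
    {k : κ → ι} (hk : k.Injective) :
    P.map (fun ω j => X (k j) ω) = Measure.pi fun _ : κ => μ := by
  rw [(iIndepFun_iff_map_fun_eq_pi_map fun j => hX (k j)).1 (hindep.precomp hk)]
  simp only [hlaw]

theorem ProbabilityTheory.iIndepFun.integral_comp_injective_eq [Fintype κ]
    (hindep : iIndepFun X P) (hX : ∀ i, AEMeasurable (X i) P) (hlaw : ∀ i, P.map (X i) = μ)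
    {k : κ → ι} (hk : k.Injective) {f : (κ → S) → ℝ} (hf : Measurable f) :
    ∫ ω, f (fun j => X (k j) ω) ∂P = ∫ x, f x ∂(Measure.pi fun _ : κ => μ) := by
  rw [← hindep.map_comp_injective_eq_pi hX hlaw hk,
    integral_map (aemeasurable_pi_lambda _ fun j => hX (k j)) hf.aestronglyMeasurable]

theorem integrable_comp_of_abs_le [Fintype κ] (hX : ∀ i, AEMeasurable (X i) P) (k : κ → ι)
    {f : (κ → S) → ℝ} (hf : Measurable f) {C : ℝ} (hfb : ∀ x, |f x| ≤ C) :
    Integrable (fun ω => f fun j => X (k j) ω) P :=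
  .of_bound (hf.comp_aemeasurable (aemeasurable_pi_lambda _ fun j => hX (k j))).aestronglyMeasurable
    C (.of_forall fun _ => hfb _)

end Sampling

theorem empirical_product_bias_bound_general {S : Type*} [MeasurableSpace S]
    {Ω : Type*} [MeasurableSpace Ω] (P : Measure Ω) [IsProbabilityMeasure P]
    (μ : Measure S) [IsProbabilityMeasure μ]
    (N : ℕ)
    (X : Fin N → Ω → S)
    (hindep : iIndepFun X P)
    (hlaw : ∀ k, P.map (X k) = μ)
    (d : ℕ) (hNd : d ^ 2 ≤ N)
    (f : (Fin d → S) → ℝ) (hf : Measurable f) (hfb : ∀ x, |f x| ≤ 1) :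
    |(∫ ω, (N : ℝ)⁻¹ ^ d * ∑ k : Fin d → Fin N, f (fun i => X (k i) ω) ∂P) -
        ∫ x, f x ∂(Measure.pi fun _ : Fin d => μ)| ≤
        2 * (1 - (N.factorial : ℝ) / ((N - d).factorial * N ^ d)) ∧
      2 * (1 - (N.factorial : ℝ) / ((N - d).factorial * N ^ d)) ≤
        2 * (1 - (1 - (d : ℝ) / N) ^ d) ∧
      2 * (1 - (1 - (d : ℝ) / N) ^ d) ≤ 2 * d ^ 2 / N := by
  have hdN : d ≤ N := (Nat.le_self_pow two_ne_zero d).trans hNd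
  -- `P.map (X k)` would be `0` if `X k` were not a.e.-measurable.
  have hX : ∀ k, AEMeasurable (X k) P :=
    fun k => .of_map_ne_zero (by rw [hlaw k]; exact IsProbabilityMeasure.ne_zero μ)
  have : Nonempty (Fin d → Fin N) := ⟨Fin.castLE hdN⟩
  rw [Nat.factorial_div_factorial_sub_mul_eq hdN]
  refine ⟨?_, by linarith [one_sub_div_pow_le_descFactorial_div_pow hdN], ?_⟩
  · have hmean : ∫ ω, (N : ℝ)⁻¹ ^ d * ∑ k : Fin d → Fin N, f (fun i => X (k i) ω) ∂P
        = (Fintype.card (Fin d → Fin N) : ℝ)⁻¹ *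
          ∑ k : Fin d → Fin N, ∫ ω, f (fun i => X (k i) ω) ∂P := by
      rw [integral_const_mul, integral_finsetSum _ fun k _ => integrable_comp_of_abs_le hX k hf hfb]
      simp
    rw [hmean, ← card_filter_injective_fin]
    simpa using abs_inv_card_mul_sum_sub_le (p := Function.Injective)
      (fun _ => abs_integral_le_of_abs_le (ν := P) fun _ => hfb _) (abs_integral_le_of_abs_le hfb)
      fun _ hk => hindep.integral_comp_injective_eq hX hlaw hk hf
  · rw [mul_div_assoc]
    linarith [one_sub_one_sub_div_pow_le hdN]

/-- Bias bound for the product empirical measure: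
`|E[μ̂^{⊗d}(f)] − μ^{⊗d}(f)| ≤ 2(1 − N!/((N−d)! N^d)) ≤ 2(1 − (1 − d/N)^d) ≤ 2d²/N`
for `|f| ≤ 1`, `d ≥ 1`, `N ≥ d²`. -/
theorem empirical_product_bias_bound {S : Type*} [MeasurableSpace S]
    {Ω : Type*} [MeasurableSpace Ω] (P : Measure Ω) [IsProbabilityMeasure P]
    (μ : Measure S) [IsProbabilityMeasure μ]
    (N : ℕ) (hN : 0 < N)
    (X : Fin N → Ω → S) (hmeas : ∀ k, Measurable (X k))
    (hindep : iIndepFun X P)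
    (hlaw : ∀ k, P.map (X k) = μ)
    (d : ℕ) (hd : 1 ≤ d) (hNd : d ^ 2 ≤ N)
    (f : (Fin d → S) → ℝ) (hf : Measurable f) (hfb : ∀ x, |f x| ≤ 1) :
    |(∫ ω, (N : ℝ)⁻¹ ^ d * ∑ k : Fin d → Fin N, f (fun i => X (k i) ω) ∂P) -
        ∫ x, f x ∂(Measure.pi fun _ : Fin d => μ)| ≤
        2 * (1 - (N.factorial : ℝ) / ((N - d).factorial * N ^ d)) ∧
      2 * (1 - (N.factorial : ℝ) / ((N - d).factorial * N ^ d)) ≤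
        2 * (1 - (1 - (d : ℝ) / N) ^ d) ∧
      2 * (1 - (1 - (d : ℝ) / N) ^ d) ≤ 2 * d ^ 2 / N :=
  empirical_product_bias_bound_general P μ N X hindep hlaw d hNd f hf hfb
end

section
/- Consider the filtering recursion π_n = F_n π_{n−1} with F_n = C_n ∘ P (correction then prediction) and the bootstrap particle filter π̂_n = Ĉ_n π̂_{n−1} with Ĉ_n = C_n ∘ S^N ∘ P, both started at π_0 = π̂_0 = μ. Assume the observation density satisfies κ ≤ g(x, y) ≤ κ^{−1} with 0 < κ < 1 (so each C_n is 2κ^{−2}-Lipschitz in ⫼·⫼), P is a ⫼·⫼-contraction, and ⫼ρ − S^N ρ⫼ ≤ 1/√N. Then for all n ≥ 1, ⫼π_n − π̂_n⫼ ≤ (Σ_{i=1}^n (2κ^{−2})^i) / √N. -/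
/-!
The error `eₙ = D(πₙ, π̂ₙ)` obeys `eₙ₊₁ ≤ L (eₙ + ε)` with `L = 2κ⁻²` and `ε = 1/√N`: insert
`P π̂ₙ` between `P πₙ` and `S^N P π̂ₙ`, then use that `P` contracts and `Cₙ₊₁` is `L`-Lipschitz.
Unrolling this recursion from `e₀ = 0` gives `eₙ ≤ (L + L² + ⋯ + Lⁿ) ε`.
-/

open Finset

theorem le_sum_pow_succ_mul_of_le_mul_add {e : ℕ → ℝ} {L ε : ℝ} (hL : 0 ≤ L) (h0 : e 0 ≤ 0)
    (hstep : ∀ n, e (n + 1) ≤ L * (e n + ε)) (n : ℕ) :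
    e n ≤ (∑ i ∈ range n, L ^ (i + 1)) * ε := by
  induction n with
  | zero => simpa using h0
  | succ n ih =>
    have hsum : ∑ i ∈ range (n + 1), L ^ (i + 1) = L * (∑ i ∈ range n, L ^ (i + 1) + 1) := by
      rw [sum_range_succ', mul_add, mul_sum]
      simp only [pow_succ', pow_zero, mul_one]
    calc e (n + 1) ≤ L * (e n + ε) := hstep n
      _ ≤ L * ((∑ i ∈ range n, L ^ (i + 1)) * ε + ε) := by gcongr
      _ = (∑ i ∈ range (n + 1), L ^ (i + 1)) * ε := by rw [hsum]; ring

theorem le_mul_add_of_comp_perturbed {M : Type*} {D : M → M → ℝ}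
    (htri : ∀ x y z, D x z ≤ D x y + D y z) {C P S : M → M} {L ε : ℝ} (hL : 0 ≤ L)
    (hC : ∀ x y, D (C x) (C y) ≤ L * D x y) (hP : ∀ x y, D (P x) (P y) ≤ D x y)
    (hS : ∀ x, D x (S x) ≤ ε) (x y : M) :
    D (C (P x)) (C (S (P y))) ≤ L * (D x y + ε) :=
  calc D (C (P x)) (C (S (P y))) ≤ L * D (P x) (S (P y)) := hC _ _
    _ ≤ L * (D (P x) (P y) + D (P y) (S (P y))) := by gcongr; exact htri _ _ _
    _ ≤ L * (D x y + ε) := by gcongr; exacts [hP x y, hS _]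

theorem bootstrap_particle_filter_crude_bound_general {M : Type*} (D : M → M → ℝ)
    (hself : ∀ x, D x x = 0)
    (htri : ∀ x y z, D x z ≤ D x y + D y z)
    (Cor : ℕ → M → M) (Pm Sm : M → M)
    (κ : ℝ) (hκ0 : 0 < κ) (N : ℕ)
    (hCor : ∀ n x y, D (Cor n x) (Cor n y) ≤ 2 * (κ ^ 2)⁻¹ * D x y)
    (hP : ∀ x y, D (Pm x) (Pm y) ≤ D x y)
    (hS : ∀ x, D x (Sm x) ≤ 1 / Real.sqrt N)
    (μ : M) (pi pihat : ℕ → M)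
    (hpi0 : pi 0 = μ) (hpihat0 : pihat 0 = μ)
    (hpi : ∀ n, pi (n + 1) = Cor (n + 1) (Pm (pi n)))
    (hpihat : ∀ n, pihat (n + 1) = Cor (n + 1) (Sm (Pm (pihat n)))) :
    ∀ n, D (pi n) (pihat n) ≤
      (∑ i ∈ Finset.range n, (2 * (κ ^ 2)⁻¹) ^ (i + 1)) / Real.sqrt N := by
  have hL : 0 ≤ 2 * (κ ^ 2)⁻¹ := by positivity
  intro n
  rw [div_eq_mul_one_div]
  refine le_sum_pow_succ_mul_of_le_mul_add (e := fun k => D (pi k) (pihat k)) hL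
    (by rw [hpi0, hpihat0, hself]) (fun k => ?_) n
  rw [hpi, hpihat]
  exact le_mul_add_of_comp_perturbed htri hL (hCor (k + 1)) hP hS _ _

/-- Crude time-dependent error bound for the bootstrap particle filter: if the
correction maps are `2κ⁻²`-Lipschitz, the prediction map is a contraction, and
sampling has error `1/√N`, all for a pseudometric `D` on (random) measures, then
the filter `π_n = C_n P π_{n−1}` and particle filter `π̂_n = C_n S^N P π̂_{n−1}`
started from the same initial condition satisfy
`D(π_n, π̂_n) ≤ (Σ_{i=1}^n (2κ⁻²)^i)/√N`. -/
theorem bootstrap_particle_filter_crude_bound {M : Type*} (D : M → M → ℝ)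
    (hself : ∀ x, D x x = 0) (hsymm : ∀ x y, D x y = D y x)
    (htri : ∀ x y z, D x z ≤ D x y + D y z)
    (Cor : ℕ → M → M) (Pm Sm : M → M)
    (κ : ℝ) (hκ0 : 0 < κ) (hκ1 : κ < 1) (N : ℕ) (hN : 0 < N)
    (hCor : ∀ n x y, D (Cor n x) (Cor n y) ≤ 2 * (κ ^ 2)⁻¹ * D x y)
    (hP : ∀ x y, D (Pm x) (Pm y) ≤ D x y)
    (hS : ∀ x, D x (Sm x) ≤ 1 / Real.sqrt N)
    (μ : M) (pi pihat : ℕ → M)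
    (hpi0 : pi 0 = μ) (hpihat0 : pihat 0 = μ)
    (hpi : ∀ n, pi (n + 1) = Cor (n + 1) (Pm (pi n)))
    (hpihat : ∀ n, pihat (n + 1) = Cor (n + 1) (Sm (Pm (pihat n)))) :
    ∀ n, D (pi n) (pihat n) ≤
      (∑ i ∈ Finset.range n, (2 * (κ ^ 2)⁻¹) ^ (i + 1)) / Real.sqrt N :=
  bootstrap_particle_filter_crude_bound_general D hself htri Cor Pm Sm κ hκ0 N hCor hP hS μ pi pihat
    hpi0 hpihat0 hpi hpihat
end

section
/- Let μ = μ¹ ⊗ ⋯ ⊗ μ^d and ν = ν¹ ⊗ ⋯ ⊗ ν^d be product probability measures on S = S¹ × ⋯ × S^d, and let Λ : S → ℝ be bounded, strictly positive, and measurable. Define μ_Λ(A) = ∫_A Λ dμ / ∫ Λ dμ and ν_Λ analogously. Suppose there is ε > 0 such that for each i there is a measurable function Λ^i : S → ℝ not depending on the i-th coordinate (Λ^i(x) = Λ^i(x̃) whenever x and x̃ agree off coordinate i) with ε Λ^i(x) ≤ Λ(x) ≤ ε^{−1} Λ^i(x) for all x. Then ‖μ_Λ − ν_Λ‖ ≤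 (2/ε²) Σ_{i=1}^d ‖μ^i − ν^i‖, where ‖·‖ denotes total variation distance (sup over |f| ≤ 1 of the difference of integrals). -/
/-!
Replace the factors `μ i` by `ν i` one coordinate at a time. For a single swap at coordinate `i`,
split `S = S i × S^{-i}`: since `Λ^i` depends only on the second factor, for every fixed `y` the
function `x ↦ g (x, y)` with `|g| ≤ Λ ≤ ε⁻¹ Λ^i` is bounded by `ε⁻¹ Λ^i(y)`, so the total
variation bound for `μ i, ν i` and Fubini bound the change of both the numerator and the
normalising constant of the reweighted mean by `ε⁻¹ t i ∫ Λ^i`. The normalising constants are at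
least `ε ∫ Λ^i`, and the elementary estimate `|a / b - a' / b'| ≤ (|a - a'| + |b - b'|) / b` for
`|a'| ≤ b'` gives `2 t i / ε²` per swap.
-/

open MeasureTheory

theorem abs_div_sub_div_le {a a' b b' D : ℝ} (hb : 0 < b) (hb' : 0 < b') (ha' : |a'| ≤ b')
    (haa' : |a - a'| ≤ D) (hbb' : |b - b'| ≤ D) : |a / b - a' / b'| ≤ 2 * D / b := by
  have hratio : |a' / b'| ≤ 1 := by
    rw [abs_div, abs_of_pos hb']
    exact div_le_one_of_le₀ ha' hb'.le
  have hsplit : a / b - a' / b' = ((a - a') + a' / b' * (b' - b)) / b := by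
    field_simp
    ring
  rw [abs_sub_comm] at hbb'
  rw [hsplit, abs_div, abs_of_pos hb]
  gcongr
  calc |a - a' + a' / b' * (b' - b)| ≤ |a - a'| + |a' / b'| * |b' - b| := by
        rw [← abs_mul]; exact abs_add_le _ _
    _ ≤ D + 1 * D := by gcongr
    _ = 2 * D := by ring

section

variable {α β : Type*} [MeasurableSpace α] [MeasurableSpace β]

def TVDistLE (μ ν : Measure α) (t : ℝ) : Prop :=
  ∀ f : α → ℝ, Measurable f → (∀ x, |f x| ≤ 1) → |∫ x, f x ∂μ - ∫ x, f x ∂ν| ≤ t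

noncomputable def reweightedMean (Λ f : α → ℝ) (ρ : Measure α) : ℝ :=
  (∫ x, f x * Λ x ∂ρ) / ∫ x, Λ x ∂ρ

theorem TVDistLE.abs_integral_sub_le {μ ν : Measure α} {t c : ℝ} (h : TVDistLE μ ν t)
    {f : α → ℝ} (hf : Measurable f) (hc : 0 ≤ c) (hfc : ∀ x, |f x| ≤ c) :
    |∫ x, f x ∂μ - ∫ x, f x ∂ν| ≤ c * t := by
  rcases hc.eq_or_lt with rfl | hc
  · have hf0 : f = 0 := funext fun x => abs_nonpos_iff.mp (hfc x)
    simp [hf0]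
  · have h' := h (fun x => f x / c) (hf.div_const c) fun x => by
      rw [abs_div, abs_of_pos hc]
      exact div_le_one_of_le₀ (hfc x) hc.le
    rwa [integral_div, integral_div, ← sub_div, abs_div, abs_of_pos hc, div_le_iff₀' hc] at h'

theorem TVDistLE.abs_integral_prod_sub_le {m n : Measure α} [IsProbabilityMeasure m]
    [IsProbabilityMeasure n] {σ : Measure β} [SFinite σ] {t : ℝ} (h : TVDistLE m n t)
    {g : α × β → ℝ} (hg : Measurable g) {L : β → ℝ} (hL : Integrable L σ)
    (hgL : ∀ x y, |g (x, y)| ≤ L y) :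
    |∫ z, g z ∂(m.prod σ) - ∫ z, g z ∂(n.prod σ)| ≤ t * ∫ y, L y ∂σ := by
  have hint : ∀ (ρ : Measure α) [IsFiniteMeasure ρ], Integrable g (ρ.prod σ) := fun ρ _ =>
    (hL.comp_snd ρ).mono' hg.aestronglyMeasurable (ae_of_all _ fun z => hgL z.1 z.2)
  obtain ⟨x₀⟩ := nonempty_of_isProbabilityMeasure m
  have hslice : ∀ y, ‖∫ x, g (x, y) ∂m - ∫ x, g (x, y) ∂n‖ ≤ t * L y := fun y => by
    rw [Real.norm_eq_abs, mul_comm]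
    exact h.abs_integral_sub_le (hg.comp measurable_prodMk_right)
      ((abs_nonneg _).trans (hgL x₀ y)) fun x => hgL x y
  rw [integral_prod_symm g (hint m), integral_prod_symm g (hint n),
    ← integral_sub (hint m).integral_prod_right (hint n).integral_prod_right,
    ← integral_const_mul]
  exact norm_integral_le_of_norm_le (hL.const_mul t) (ae_of_all _ hslice)

theorem abs_reweightedMean_sub_le {ρ ρ' : Measure α} {G f : α → ℝ} {B D : ℝ}
    (hGm : Measurable G) (hG0 : ∀ x, 0 ≤ G x) (hGint : Integrable G ρ') (hfm : Measurable f)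
    (hf : ∀ x, |f x| ≤ 1) (hB : 0 < B) (hBρ : B ≤ ∫ x, G x ∂ρ) (hρ' : 0 < ∫ x, G x ∂ρ')
    (hdiff : ∀ g : α → ℝ, Measurable g → (∀ x, |g x| ≤ G x) →
      |∫ x, g x ∂ρ - ∫ x, g x ∂ρ'| ≤ D) :
    |reweightedMean G f ρ - reweightedMean G f ρ'| ≤ 2 * D / B := by
  have hfG : ∀ x, |f x * G x| ≤ G x := fun x => by
    rw [abs_mul, abs_of_nonneg (hG0 x)]
    exact mul_le_of_le_one_left (hG0 x) (hf x)
  have hnum' : ‖∫ x, f x * G x ∂ρ'‖ ≤ ∫ x, G x ∂ρ' :=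
    norm_integral_le_of_norm_le hGint (ae_of_all _ hfG)
  have hD : 0 ≤ D := (abs_nonneg _).trans (hdiff G hGm fun x => (abs_of_nonneg (hG0 x)).le)
  calc _ ≤ 2 * D / ∫ x, G x ∂ρ :=
        abs_div_sub_div_le (hB.trans_le hBρ) hρ' hnum' (hdiff _ (hfm.mul hGm) hfG)
          (hdiff G hGm fun x => (abs_of_nonneg (hG0 x)).le)
    _ ≤ 2 * D / B := by gcongr

theorem abs_reweightedMean_prod_sub_le {m n : Measure α} [IsProbabilityMeasure m]
    [IsProbabilityMeasure n] {σ : Measure β} [IsProbabilityMeasure σ] {t ε C : ℝ}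
    (h : TVDistLE m n t) (hε : 0 < ε) {G : α × β → ℝ} (hGm : Measurable G)
    (hGpos : ∀ z, 0 < G z) (hGC : ∀ z, G z ≤ C) {L : β → ℝ} (hLm : Measurable L)
    (hGL : ∀ x y, ε * L y ≤ G (x, y) ∧ G (x, y) ≤ ε⁻¹ * L y)
    {f : α × β → ℝ} (hfm : Measurable f) (hf : ∀ z, |f z| ≤ 1) :
    |reweightedMean G f (m.prod σ) - reweightedMean G f (n.prod σ)| ≤ 2 / ε ^ 2 * t := by
  obtain ⟨x₀⟩ := nonempty_of_isProbabilityMeasure m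
  have hLpos : ∀ y, 0 < L y := fun y =>
    pos_of_mul_pos_right ((hGpos (x₀, y)).trans_le (hGL x₀ y).2) (inv_pos.2 hε).le
  have hLint : Integrable L σ :=
    .of_bound hLm.aestronglyMeasurable (C / ε) <| ae_of_all _ fun y => by
    rw [Real.norm_eq_abs, abs_of_pos (hLpos y), le_div_iff₀' hε]
    exact (hGL x₀ y).1.trans (hGC _)
  set I := ∫ y, L y ∂σ
  have hI : 0 < I := by
    rw [integral_pos_iff_support_of_nonneg (fun y => (hLpos y).le) hLint,
      Function.support_eq_univ fun y => (hLpos y).ne']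
    simp
  have hGint : ∀ (ρ : Measure α) [IsFiniteMeasure ρ], Integrable G (ρ.prod σ) := fun ρ _ =>
    .of_bound hGm.aestronglyMeasurable C <| ae_of_all _ fun z => by
      rw [Real.norm_eq_abs, abs_of_pos (hGpos z)]
      exact hGC z
  have hlower : ∀ (ρ : Measure α) [IsProbabilityMeasure ρ], ε * I ≤ ∫ z, G z ∂(ρ.prod σ) := by
    intro ρ _
    calc ε * I = ∫ z, ε * L z.2 ∂(ρ.prod σ) := by simp [integral_fun_snd, I, integral_const_mul]
      _ ≤ ∫ z, G z ∂(ρ.prod σ) :=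
        integral_mono ((hLint.const_mul ε).comp_snd ρ) (hGint ρ) fun z => (hGL z.1 z.2).1
  have hdiff : ∀ g : α × β → ℝ, Measurable g → (∀ z, |g z| ≤ G z) →
      |∫ z, g z ∂(m.prod σ) - ∫ z, g z ∂(n.prod σ)| ≤ t * (ε⁻¹ * I) := fun g hg hgG => by
    simpa [I, integral_const_mul] using h.abs_integral_prod_sub_le hg (hLint.const_mul ε⁻¹)
      fun x y => (hgG (x, y)).trans (hGL x y).2
  calc _ ≤ 2 * (t * (ε⁻¹ * I)) / (ε * I) :=
        abs_reweightedMean_sub_le hGm (fun z => (hGpos z).le) (hGint n) hfm hf (mul_pos hε hI)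
          (hlower m) ((mul_pos hε hI).trans_le (hlower n)) hdiff
    _ = 2 / ε ^ 2 * t := by field_simp

theorem MeasureTheory.MeasurePreserving.reweightedMean_eq {μ : Measure α} {ν : Measure β}
    {e : α ≃ᵐ β} (he : MeasurePreserving e μ ν) (Λ f : α → ℝ) :
    reweightedMean Λ f μ = reweightedMean (Λ ∘ e.symm) (f ∘ e.symm) ν := by
  simp only [reweightedMean, ← he.integral_comp', Function.comp_apply,
    MeasurableEquiv.symm_apply_apply]

end

theorem abs_reweightedMean_pi_sub_le {d : ℕ} {S : Fin d → Type*} [∀ i, MeasurableSpace (S i)]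
    {a b : ∀ i, Measure (S i)} [∀ i, IsProbabilityMeasure (a i)] [∀ i, IsProbabilityMeasure (b i)]
    {i : Fin d} (hab : ∀ j ≠ i, a j = b j) {t ε C : ℝ} (h : TVDistLE (a i) (b i) t) (hε : 0 < ε)
    {Λ Λi : (∀ j, S j) → ℝ} (hΛm : Measurable Λ) (hΛpos : ∀ x, 0 < Λ x) (hΛC : ∀ x, Λ x ≤ C)
    (hΛim : Measurable Λi) (hΛi : ∀ x x' : ∀ j, S j, (∀ j ≠ i, x j = x' j) → Λi x = Λi x')
    (hΛΛi : ∀ x, ε * Λi x ≤ Λ x ∧ Λ x ≤ ε⁻¹ * Λi x)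
    {f : (∀ j, S j) → ℝ} (hfm : Measurable f) (hf : ∀ x, |f x| ≤ 1) :
    |reweightedMean Λ f (Measure.pi a) - reweightedMean Λ f (Measure.pi b)| ≤ 2 / ε ^ 2 * t := by
  obtain ⟨n, rfl⟩ : ∃ n, d = n + 1 := ⟨d - 1, by have := i.pos; omega⟩
  set e := MeasurableEquiv.piFinSuccAbove S i
  have hrest : (fun j => b (i.succAbove j)) = fun j => a (i.succAbove j) :=
    funext fun j => (hab _ (i.succAbove_ne j)).symm
  have hea := measurePreserving_piFinSuccAbove a i
  have heb := measurePreserving_piFinSuccAbove b i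
  rw [hrest] at heb
  obtain ⟨s₀⟩ := nonempty_of_isProbabilityMeasure (a i)
  rw [hea.reweightedMean_eq, heb.reweightedMean_eq]
  refine abs_reweightedMean_prod_sub_le h hε (hΛm.comp e.symm.measurable) (fun _ => hΛpos _)
    (fun _ => hΛC _) (L := fun y => Λi (e.symm (s₀, y)))
    (hΛim.comp (e.symm.measurable.comp measurable_prodMk_left)) (fun s y => ?_)
    (hfm.comp e.symm.measurable) fun _ => hf _
  rw [hΛi (e.symm (s₀, y)) (e.symm (s, y)) fun j hj => ?_]
  · exact hΛΛi _
  · obtain ⟨j, rfl⟩ := Fin.exists_succAbove_eq hj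
    simp [e, Fin.insertNth_apply_succAbove]

section Hybrid

variable {d : ℕ} {S : Fin d → Type*} [∀ i, MeasurableSpace (S i)] (μ ν : ∀ i, Measure (S i))

def hybrid (k : ℕ) (i : Fin d) : Measure (S i) :=
  if (i : ℕ) < k then ν i else μ i

instance [∀ i, IsProbabilityMeasure (μ i)] [∀ i, IsProbabilityMeasure (ν i)] (k : ℕ) (i : Fin d) :
    IsProbabilityMeasure (hybrid μ ν k i) := by
  unfold hybrid
  split_ifs <;> infer_instance

theorem hybrid_zero : hybrid μ ν 0 = μ := by
  funext i
  simp [hybrid]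

theorem hybrid_of_le {k : ℕ} (hk : d ≤ k) : hybrid μ ν k = ν := by
  funext i
  simp [hybrid, i.isLt.trans_le hk]

theorem hybrid_apply_self {k : ℕ} (hk : k < d) : hybrid μ ν k ⟨k, hk⟩ = μ ⟨k, hk⟩ := by
  simp [hybrid]

theorem hybrid_succ_apply_self {k : ℕ} (hk : k < d) : hybrid μ ν (k + 1) ⟨k, hk⟩ = ν ⟨k, hk⟩ := by
  simp [hybrid]

theorem hybrid_succ_apply_of_ne {k : ℕ} (hk : k < d) {j : Fin d} (hj : j ≠ ⟨k, hk⟩) :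
    hybrid μ ν k j = hybrid μ ν (k + 1) j := by
  have hjk : (j : ℕ) ≠ k := fun h => hj (Fin.ext h)
  unfold hybrid
  split_ifs <;> first | rfl | omega

end Hybrid

/-- Reweighting of product measures: if `Λ` is bounded, strictly positive, and
for each coordinate `i` is `ε`-equivalent to a function `Λ^i` not depending on
the `i`-th coordinate, then the `Λ`-reweighted product measures satisfy
`‖μ_Λ − ν_Λ‖ ≤ (2/ε²) Σ_i ‖μ^i − ν^i‖`. -/
theorem product_reweighting_tv_bound {d : ℕ} (S : Fin d → Type*)
    [∀ i, MeasurableSpace (S i)]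
    (μ ν : ∀ i, Measure (S i))
    [∀ i, IsProbabilityMeasure (μ i)] [∀ i, IsProbabilityMeasure (ν i)]
    (Λ : (∀ i, S i) → ℝ) (hΛm : Measurable Λ) (hΛpos : ∀ x, 0 < Λ x)
    (Cb : ℝ) (hΛb : ∀ x, Λ x ≤ Cb)
    (ε : ℝ) (hε : 0 < ε)
    (hfac : ∀ i : Fin d, ∃ Λi : (∀ j, S j) → ℝ, Measurable Λi ∧
      (∀ x x' : ∀ j, S j, (∀ j, j ≠ i → x j = x' j) → Λi x = Λi x') ∧
      ∀ x, ε * Λi x ≤ Λ x ∧ Λ x ≤ ε⁻¹ * Λi x)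
    (t : Fin d → ℝ)
    (ht : ∀ i, ∀ f : S i → ℝ, Measurable f → (∀ s, |f s| ≤ 1) →
      |(∫ s, f s ∂(μ i)) - ∫ s, f s ∂(ν i)| ≤ t i) :
    ∀ f : (∀ i, S i) → ℝ, Measurable f → (∀ x, |f x| ≤ 1) →
      |(∫ x, f x * Λ x ∂(Measure.pi μ)) / (∫ x, Λ x ∂(Measure.pi μ)) -
        (∫ x, f x * Λ x ∂(Measure.pi ν)) / (∫ x, Λ x ∂(Measure.pi ν))|
        ≤ (2 / ε ^ 2) * ∑ i, t i := by
  intro f hfm hf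
  have hstep : ∀ k (hk : k < d), dist (reweightedMean Λ f (Measure.pi (hybrid μ ν k)))
      (reweightedMean Λ f (Measure.pi (hybrid μ ν (k + 1)))) ≤ 2 / ε ^ 2 * t ⟨k, hk⟩ := by
    intro k hk
    obtain ⟨Λi, hΛim, hΛi, hΛΛi⟩ := hfac ⟨k, hk⟩
    have hswap : TVDistLE (hybrid μ ν k ⟨k, hk⟩) (hybrid μ ν (k + 1) ⟨k, hk⟩) (t ⟨k, hk⟩) := by
      rw [hybrid_apply_self, hybrid_succ_apply_self]
      exact ht _
    exact abs_reweightedMean_pi_sub_le (fun j => hybrid_succ_apply_of_ne μ ν hk) hswap hε hΛm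
      hΛpos hΛb hΛim hΛi hΛΛi hfm hf
  have htelescope := dist_le_range_sum_of_dist_le
    (f := fun k => reweightedMean Λ f (Measure.pi (hybrid μ ν k)))
    (d := fun k => if hk : k < d then 2 / ε ^ 2 * t ⟨k, hk⟩ else 0) d
    fun hk => by simpa only [dif_pos hk] using hstep _ hk
  simp only [hybrid_zero, hybrid_of_le μ ν le_rfl, Real.dist_eq, Finset.sum_range, Fin.is_lt,
    dif_pos, Fin.eta, ← Finset.mul_sum] at htelescope
  exact htelescope
end

section
/- Filter stability for strongly mixing models: suppose the Markov transition density satisfies ε ≤ p(x, z) ≤ ε^{−1} for all x, z (with respect to a reference measure ψ), and let F_n denote the one-step filtering update with likelihood g(·, Y_n) > 0, i.e., (F_n ρ)(f) = ∫ f(x') g(x', Y_n) p(x, x') ψ(dx') ρ(dx) / ∫ g(x', Y_n) p(x, x') ψ(dx') ρ(dx). Then for all probability measures ρ, ρ' and s < n, ‖F_n ⋯ F_{s+1} ρ − F_n ⋯ F_{s+1} ρ'‖ ≤ ε^{−2}(1 − ε²)^{n−s} ‖ρ − ρ'‖ in total variation. -/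
/-!
Write `K_k f (x) = ∫ g_k(z) p(x,z) f(z) ψ(dz)` and `U = K_{s+1} ⋯ K_n`. By Fubini the filter is a
ratio of backward quantities: `∫ f d(F_n ⋯ F_{s+1} ρ) = ρ(U f) / ρ(U 1)`.

Mixing makes every `K_k` comparable to one positive functional: `ε m_k(w) ≤ K_k w ≤ ε⁻¹ m_k(w)`
for `w ≥ 0`, where `m_k(w) = ∫ g_k w dψ`. Applied to `w = u - a v` and `w = b v - u`, this shows
that if `u / v` ranges over an interval of length `δ`, then `K_k u / K_k v` ranges over one of
length `(1 - ε²) δ`; it also gives `K_k v (x) ≤ ε⁻² K_k v (x')`. Starting from `f / 1 ∈ [-1, 1]`,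
`U f / U 1` ranges over an interval `[a, a + 2 (1 - ε²)^(n-s)]`. With `c = ρ'(U f) / ρ'(U 1)`,
the function `U f - c U 1` has `ρ'`-integral `0` and, since `U 1 ≤ ε⁻² ρ(U 1)`, ranges over an
interval of length `2 ε⁻² (1 - ε²)^(n-s) ρ(U 1)`; the total variation bound on `ρ - ρ'` then
controls `ρ(U f) / ρ(U 1) - c`.
-/

open MeasureTheory

/-- One step of the filtering recursion: the (normalized) measure with density
`z ↦ g(z) ∫ p(x,z) ρ(dx)` with respect to the reference measure `ψ`. -/
noncomputable def filterStep {X : Type*} [MeasurableSpace X]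
    (ψ : Measure X) (g : X → ℝ) (p : X → X → ℝ) (ρ : Measure X) : Measure X :=
  ((ψ.withDensity fun z => ENNReal.ofReal (g z * ∫ x, p x z ∂ρ)) Set.univ)⁻¹ •
    ψ.withDensity fun z => ENNReal.ofReal (g z * ∫ x, p x z ∂ρ)

/-- The composed filtering maps `F_n ∘ ⋯ ∘ F_{s+1}` (identity if `n ≤ s`). -/
noncomputable def filterIter {X : Type*} [MeasurableSpace X]
    (ψ : Measure X) (g : ℕ → X → ℝ) (p : X → X → ℝ) (s : ℕ) :
    ℕ → Measure X → Measure X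
  | 0 => id
  | n + 1 => if n + 1 ≤ s then id else filterStep ψ (g (n + 1)) p ∘ filterIter ψ g p s n

open Function

section BoundedMeasurable

variable {α : Type*} [MeasurableSpace α]

structure IsBoundedMeasurable (f : α → ℝ) : Prop where
  measurable : Measurable f
  bounded : ∃ C, ∀ x, |f x| ≤ C

namespace IsBoundedMeasurable

variable {f g : α → ℝ}

theorem const (c : ℝ) : IsBoundedMeasurable fun _ : α => c :=
  ⟨measurable_const, |c|, fun _ => le_rfl⟩

theorem one : IsBoundedMeasurable (1 : α → ℝ) := const 1

theorem mul (hf : IsBoundedMeasurable f) (hg : IsBoundedMeasurable g) :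
    IsBoundedMeasurable (f * g) := by
  obtain ⟨C, hC⟩ := hf.bounded
  obtain ⟨D, hD⟩ := hg.bounded
  refine ⟨hf.measurable.mul hg.measurable, C * D, fun x => ?_⟩
  rw [Pi.mul_apply, abs_mul]
  exact mul_le_mul (hC x) (hD x) (abs_nonneg _) ((abs_nonneg _).trans (hC x))

theorem add (hf : IsBoundedMeasurable f) (hg : IsBoundedMeasurable g) :
    IsBoundedMeasurable (f + g) := by
  obtain ⟨C, hC⟩ := hf.bounded
  obtain ⟨D, hD⟩ := hg.bounded
  exact ⟨hf.measurable.add hg.measurable, C + D, fun x =>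
    (abs_add_le _ _).trans (add_le_add (hC x) (hD x))⟩

theorem const_mul_add_const_mul (hf : IsBoundedMeasurable f) (hg : IsBoundedMeasurable g)
    (a b : ℝ) : IsBoundedMeasurable fun x => a * f x + b * g x :=
  ((const a).mul hf).add ((const b).mul hg)

theorem comp {β : Type*} [MeasurableSpace β] (hf : IsBoundedMeasurable f) {φ : β → α}
    (hφ : Measurable φ) : IsBoundedMeasurable (f ∘ φ) :=
  ⟨hf.measurable.comp hφ, hf.bounded.imp fun _ hC x => hC (φ x)⟩

theorem integrable (hf : IsBoundedMeasurable f) (μ : Measure α) [IsFiniteMeasure μ] :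
    Integrable f μ := by
  obtain ⟨C, hC⟩ := hf.bounded
  exact .of_bound hf.measurable.aestronglyMeasurable C (ae_of_all _ hC)

theorem integral_prod_right' {β : Type*} [MeasurableSpace β] {F : α × β → ℝ}
    (hF : IsBoundedMeasurable F) (ν : Measure β) [IsFiniteMeasure ν] :
    IsBoundedMeasurable fun x => ∫ y, F (x, y) ∂ν := by
  obtain ⟨C, hC⟩ := hF.bounded
  refine ⟨hF.measurable.stronglyMeasurable.integral_prod_right'.measurable, C * ν.real Set.univ,
    fun x => ?_⟩
  rw [← Real.norm_eq_abs]
  exact norm_integral_le_of_norm_le_const (ae_of_all _ fun y => hC (x, y))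

end IsBoundedMeasurable

end BoundedMeasurable

section MeasureLemmas

variable {α : Type*} [MeasurableSpace α] {μ : Measure α}

theorem isFiniteMeasure_of_le_of_integral_ne_zero {q : α → ℝ} {ε : ℝ} (hε : 0 < ε)
    (hq : ∀ z, ε ≤ q z) (h : ∫ z, q z ∂μ ≠ 0) : IsFiniteMeasure μ := by
  have hconst : Integrable (fun _ => ε) μ :=
    (Integrable.of_integral_ne_zero h).mono' aestronglyMeasurable_const
      (ae_of_all _ fun z => by rw [Real.norm_of_nonneg hε.le]; exact hq z)
  exact (integrable_const_iff.mp hconst).resolve_left hε.ne'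

theorem integral_mul_add_mul {φ u v : α → ℝ} (hu : Integrable (fun z => φ z * u z) μ)
    (hv : Integrable (fun z => φ z * v z) μ) (a b : ℝ) :
    ∫ z, φ z * (a * u z + b * v z) ∂μ = a * ∫ z, φ z * u z ∂μ + b * ∫ z, φ z * v z ∂μ := by
  simp_rw [mul_add, mul_left_comm (φ _)]
  rw [integral_add (hu.const_mul a) (hv.const_mul b), integral_const_mul, integral_const_mul]

theorem integral_mul_integral_normalized_withDensity {h : α → ℝ} (hm : Measurable h)
    (h0 : ∀ x, 0 ≤ h x) (hi : Integrable h μ) (f : α → ℝ) :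
    (∫ x, h x ∂μ) * ∫ x, f x ∂(((μ.withDensity fun x => ENNReal.ofReal (h x)) Set.univ)⁻¹ •
      μ.withDensity fun x => ENNReal.ofReal (h x)) = ∫ x, h x * f x ∂μ := by
  rw [integral_smul_measure, withDensity_apply _ MeasurableSet.univ, setLIntegral_univ,
    ← ofReal_integral_eq_lintegral_ofReal hi (ae_of_all _ h0), ENNReal.toReal_inv,
    ENNReal.toReal_ofReal (integral_nonneg h0),
    integral_withDensity_eq_integral_toReal_smul hm.ennreal_ofReal
      (ae_of_all _ fun _ => ENNReal.ofReal_lt_top)]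
  simp_rw [ENNReal.toReal_ofReal (h0 _), smul_eq_mul]
  rcases eq_or_ne (∫ x, h x ∂μ) 0 with hI | hI
  · have hae : h =ᵐ[μ] 0 := (integral_eq_zero_iff_of_nonneg h0 hi).mp hI
    rw [hI, zero_mul, eq_comm]
    exact integral_eq_zero_of_ae (hae.mono fun x hx => by simp [hx])
  · rw [mul_inv_cancel_left₀ hI]

theorem isFiniteMeasure_inv_measure_univ_smul (ν : Measure α) :
    IsFiniteMeasure ((ν Set.univ)⁻¹ • ν) :=
  ⟨by
    rw [Measure.smul_apply, smul_eq_mul]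
    exact (ENNReal.inv_mul_le_one _).trans_lt ENNReal.one_lt_top⟩

theorem abs_integral_sub_integral_le_of_mem_Icc {ρ ρ' : Measure α} [IsProbabilityMeasure ρ]
    [IsProbabilityMeasure ρ'] {t : ℝ}
    (ht : ∀ f : α → ℝ, Measurable f → (∀ x, |f x| ≤ 1) →
      |(∫ x, f x ∂ρ) - ∫ x, f x ∂ρ'| ≤ t)
    {f : α → ℝ} (hf : Measurable f) {a b : ℝ} (hab : ∀ x, f x ∈ Set.Icc a b) :
    |(∫ x, f x ∂ρ) - ∫ x, f x ∂ρ'| ≤ (b - a) / 2 * t := by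
  obtain ⟨x₀⟩ := nonempty_of_isProbabilityMeasure ρ
  set r := (b - a) / 2 with hr_def
  set c := (a + b) / 2 with hc_def
  have hfc : ∀ x, |f x - c| ≤ r := fun x =>
    abs_le.mpr ⟨by linarith [(hab x).1, hr_def, hc_def], by linarith [(hab x).2, hr_def, hc_def]⟩
  have hshift : ∀ (μ : Measure α) [IsProbabilityMeasure μ], ∫ x, (f x - c) ∂μ = ∫ x, f x ∂μ - c :=
    fun μ _ => by
      have hfi : Integrable f μ :=
        IsBoundedMeasurable.integrable ⟨hf, |c| + r, fun x => by
          have := abs_sub_abs_le_abs_sub (f x) c; linarith [hfc x]⟩ μ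
      rw [integral_sub hfi (integrable_const c), integral_const, probReal_univ, one_smul]
  rcases ((abs_nonneg _).trans (hfc x₀)).eq_or_lt with hr | hr
  · have hconst : ∀ x, f x = c := fun x =>
      sub_eq_zero.mp (abs_nonpos_iff.mp (hr ▸ hfc x))
    simp [hconst, ← hr]
  · have hscaled := ht (fun x => (f x - c) / r) ((hf.sub measurable_const).div_const r)
      fun x => by rw [abs_div, abs_of_pos hr]; exact div_le_one_of_le₀ (hfc x) hr.le
    rw [integral_div, integral_div, hshift ρ, hshift ρ', ← sub_div, abs_div, abs_of_pos hr,
      div_le_iff₀ hr, sub_sub_sub_cancel_right] at hscaled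
    linarith

end MeasureLemmas

/-- The ratio `u / v` takes its values in an interval of length `δ`. -/
def RatioOscLE {α : Type*} (δ : ℝ) (u v : α → ℝ) : Prop :=
  ∃ a, ∀ x, a * v x ≤ u x ∧ u x ≤ (a + δ) * v x

theorem ratioOscLE_two_one_of_abs_le_one {α : Type*} {f : α → ℝ} (hf : ∀ x, |f x| ≤ 1) :
    RatioOscLE 2 f 1 :=
  ⟨-1, fun x => by
    constructor <;> norm_num <;> linarith [(abs_le.mp (hf x)).1, (abs_le.mp (hf x)).2]⟩

section RatioStability

variable {α : Type*} [MeasurableSpace α]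

theorem integral_pos_of_forall_pos {μ : Measure α} (hμ : μ ≠ 0) {f : α → ℝ}
    (hf : Integrable f μ) (hpos : ∀ x, 0 < f x) : 0 < ∫ x, f x ∂μ := by
  rw [integral_pos_iff_support_of_nonneg (fun x => (hpos x).le) hf,
    Function.support_eq_univ fun x => (hpos x).ne']
  exact Measure.measure_univ_pos.mpr hμ

theorem integral_div_integral_mem_Icc {μ : Measure α} [IsFiniteMeasure μ] {u v : α → ℝ}
    (hu : IsBoundedMeasurable u) (hv : IsBoundedMeasurable v) (hb : 0 < ∫ x, v x ∂μ) {a b : ℝ}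
    (hab : ∀ x, a * v x ≤ u x ∧ u x ≤ b * v x) :
    (∫ x, u x ∂μ) / (∫ x, v x ∂μ) ∈ Set.Icc a b := by
  rw [Set.mem_Icc, le_div_iff₀ hb, div_le_iff₀ hb, ← integral_const_mul, ← integral_const_mul]
  exact ⟨integral_mono ((hv.integrable μ).const_mul a) (hu.integrable μ) fun x => (hab x).1,
    integral_mono (hu.integrable μ) ((hv.integrable μ).const_mul b) fun x => (hab x).2⟩

theorem le_mul_integral_of_forall_le_mul {μ : Measure α} [IsProbabilityMeasure μ] {v : α → ℝ}
    (hv : IsBoundedMeasurable v) {C : ℝ} {x : α} (hC : ∀ x', v x ≤ C * v x') :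
    v x ≤ C * ∫ x', v x' ∂μ :=
  calc v x = ∫ _, v x ∂μ := by simp
    _ ≤ ∫ x', C * v x' ∂μ :=
      integral_mono (integrable_const _) ((hv.integrable μ).const_mul C) hC
    _ = C * ∫ x', v x' ∂μ := integral_const_mul _ _

theorem abs_integral_div_sub_integral_div_le {ρ ρ' : Measure α} [IsProbabilityMeasure ρ]
    [IsProbabilityMeasure ρ'] {t : ℝ}
    (ht : ∀ f : α → ℝ, Measurable f → (∀ x, |f x| ≤ 1) →
      |(∫ x, f x ∂ρ) - ∫ x, f x ∂ρ'| ≤ t)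
    {u v : α → ℝ} (hu : IsBoundedMeasurable u) (hv : IsBoundedMeasurable v)
    (hvpos : ∀ x, 0 < v x) {C δ : ℝ} (hC : ∀ x x', v x ≤ C * v x')
    (hosc : RatioOscLE δ u v) :
    |(∫ x, u x ∂ρ) / (∫ x, v x ∂ρ) - (∫ x, u x ∂ρ') / ∫ x, v x ∂ρ'| ≤ C * δ / 2 * t := by
  obtain ⟨a, ha⟩ := hosc
  have hb : 0 < ∫ x, v x ∂ρ := integral_pos_of_forall_pos (NeZero.ne ρ) (hv.integrable ρ) hvpos
  have hb' : 0 < ∫ x, v x ∂ρ' :=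
    integral_pos_of_forall_pos (NeZero.ne ρ') (hv.integrable ρ') hvpos
  set c := (∫ x, u x ∂ρ') / ∫ x, v x ∂ρ' with hc
  obtain ⟨hac, hca⟩ := integral_div_integral_mem_Icc hu hv hb' ha
  set V := C * ∫ x, v x ∂ρ with hV
  have hvV : ∀ x, v x ≤ V := fun x => le_mul_integral_of_forall_le_mul hv (hC x)
  have hrange : ∀ x, u x - c * v x ∈ Set.Icc (-((c - a) * V)) ((a + δ - c) * V) := fun x =>
    ⟨by nlinarith [(ha x).1, hvV x], by nlinarith [(ha x).2, hvV x]⟩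
  have htv := abs_integral_sub_integral_le_of_mem_Icc (f := fun x => u x - c * v x) ht
    (hu.measurable.sub (hv.measurable.const_mul c)) hrange
  have hint : ∀ (μ : Measure α) [IsFiniteMeasure μ],
      ∫ x, (u x - c * v x) ∂μ = (∫ x, u x ∂μ) - c * ∫ x, v x ∂μ := fun μ _ => by
    rw [integral_sub (hu.integrable μ) ((hv.integrable μ).const_mul c), integral_const_mul]
  have hc0 : (∫ x, u x ∂ρ') - c * ∫ x, v x ∂ρ' = 0 := by
    rw [hc, div_mul_cancel₀ _ hb'.ne', sub_self]
  rw [hint ρ, hint ρ', hc0, sub_zero] at htv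
  rw [div_sub' hb.ne', abs_div, abs_of_pos hb, div_le_iff₀ hb, mul_comm _ c]
  calc _ ≤ _ := htv
    _ = _ := by rw [hV]; ring

end RatioStability

section BackwardOperator

variable {X : Type*} [MeasurableSpace X]

structure IsMixingDensity (p : X → X → ℝ) (ε : ℝ) : Prop where
  measurable : Measurable (uncurry p)
  pos : 0 < ε
  bounds : ∀ x z, ε ≤ p x z ∧ p x z ≤ ε⁻¹

namespace IsMixingDensity

variable {p : X → X → ℝ} {ε : ℝ}

theorem isBoundedMeasurable (hp : IsMixingDensity p ε) : IsBoundedMeasurable (uncurry p) :=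
  ⟨hp.measurable, ε⁻¹, fun ⟨x, z⟩ => abs_le.mpr
    ⟨(neg_nonpos.mpr (inv_pos.mpr hp.pos).le).trans (hp.pos.le.trans (hp.bounds x z).1),
      (hp.bounds x z).2⟩⟩

theorem one_le_inv_sq [Nonempty X] (hp : IsMixingDensity p ε) : 1 ≤ ε⁻¹ ^ 2 := by
  obtain ⟨x⟩ := ‹Nonempty X›
  have hε : ε ≤ ε⁻¹ := (hp.bounds x x).1.trans (hp.bounds x x).2
  calc 1 = ε * ε⁻¹ := (mul_inv_cancel₀ hp.pos.ne').symm
    _ ≤ ε⁻¹ * ε⁻¹ := mul_le_mul_of_nonneg_right hε (inv_nonneg.mpr hp.pos.le)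
    _ = ε⁻¹ ^ 2 := (sq _).symm

end IsMixingDensity

noncomputable def backwardOp (ψ : Measure X) (g : X → ℝ) (p : X → X → ℝ) (f : X → ℝ) (x : X) :
    ℝ :=
  ∫ z, g z * p x z * f z ∂ψ

variable {ψ : Measure X} {g : X → ℝ} {p : X → X → ℝ} {ε : ℝ} {f u v w : X → ℝ}

theorem isBoundedMeasurable_kernel (hg : IsBoundedMeasurable g) (hp : IsMixingDensity p ε)
    (hf : IsBoundedMeasurable f) :
    IsBoundedMeasurable fun q : X × X => g q.2 * p q.1 q.2 * f q.2 :=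
  ((hg.comp measurable_snd).mul hp.isBoundedMeasurable).mul (hf.comp measurable_snd)

theorem integrable_kernel [IsFiniteMeasure ψ] (hg : IsBoundedMeasurable g)
    (hp : IsMixingDensity p ε) (hf : IsBoundedMeasurable f) (x : X) :
    Integrable (fun z => g z * p x z * f z) ψ :=
  ((isBoundedMeasurable_kernel hg hp hf).comp measurable_prodMk_left).integrable ψ

theorem IsBoundedMeasurable.backwardOp [IsFiniteMeasure ψ] (hf : IsBoundedMeasurable f)
    (hg : IsBoundedMeasurable g) (hp : IsMixingDensity p ε) :
    IsBoundedMeasurable (backwardOp ψ g p f) :=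
  (isBoundedMeasurable_kernel hg hp hf).integral_prod_right' ψ

theorem backwardOp_const_mul_add_const_mul [IsFiniteMeasure ψ] (hg : IsBoundedMeasurable g)
    (hp : IsMixingDensity p ε) (hu : IsBoundedMeasurable u) (hv : IsBoundedMeasurable v)
    (a b : ℝ) (x : X) :
    backwardOp ψ g p (fun z => a * u z + b * v z) x =
      a * backwardOp ψ g p u x + b * backwardOp ψ g p v x :=
  integral_mul_add_mul (integrable_kernel hg hp hu x) (integrable_kernel hg hp hv x) a b

theorem mul_integral_le_backwardOp [IsFiniteMeasure ψ] (hg : IsBoundedMeasurable g)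
    (hg0 : ∀ z, 0 ≤ g z) (hp : IsMixingDensity p ε) (hw : IsBoundedMeasurable w)
    (hw0 : ∀ z, 0 ≤ w z) (x : X) : ε * ∫ z, g z * w z ∂ψ ≤ backwardOp ψ g p w x := by
  rw [← integral_const_mul]
  refine integral_mono (((hg.mul hw).integrable ψ).const_mul ε) (integrable_kernel hg hp hw x)
    fun z => ?_
  calc ε * (g z * w z) ≤ p x z * (g z * w z) :=
        mul_le_mul_of_nonneg_right (hp.bounds x z).1 (mul_nonneg (hg0 z) (hw0 z))
    _ = g z * p x z * w z := by ring

theorem backwardOp_le_inv_mul_integral [IsFiniteMeasure ψ] (hg : IsBoundedMeasurable g)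
    (hg0 : ∀ z, 0 ≤ g z) (hp : IsMixingDensity p ε) (hw : IsBoundedMeasurable w)
    (hw0 : ∀ z, 0 ≤ w z) (x : X) : backwardOp ψ g p w x ≤ ε⁻¹ * ∫ z, g z * w z ∂ψ := by
  rw [← integral_const_mul]
  refine integral_mono (integrable_kernel hg hp hw x) (((hg.mul hw).integrable ψ).const_mul _)
    fun z => ?_
  calc g z * p x z * w z = p x z * (g z * w z) := by ring
    _ ≤ ε⁻¹ * (g z * w z) :=
        mul_le_mul_of_nonneg_right (hp.bounds x z).2 (mul_nonneg (hg0 z) (hw0 z))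

theorem backwardOp_pos [IsFiniteMeasure ψ] (hψ : ψ ≠ 0) (hg : IsBoundedMeasurable g)
    (hgpos : ∀ z, 0 < g z) (hp : IsMixingDensity p ε) (hv : IsBoundedMeasurable v)
    (hvpos : ∀ z, 0 < v z) (x : X) : 0 < backwardOp ψ g p v x :=
  (mul_pos hp.pos (integral_pos_of_forall_pos hψ ((hg.mul hv).integrable ψ)
      fun z => mul_pos (hgpos z) (hvpos z))).trans_le
    (mul_integral_le_backwardOp (ψ := ψ) hg (fun z => (hgpos z).le) hp hv (fun z => (hvpos z).le) x)

theorem backwardOp_le_inv_sq_mul [IsFiniteMeasure ψ] (hg : IsBoundedMeasurable g)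
    (hg0 : ∀ z, 0 ≤ g z) (hp : IsMixingDensity p ε) (hv : IsBoundedMeasurable v)
    (hv0 : ∀ z, 0 ≤ v z) (x x' : X) :
    backwardOp ψ g p v x ≤ ε⁻¹ ^ 2 * backwardOp ψ g p v x' :=
  calc backwardOp ψ g p v x ≤ ε⁻¹ * ∫ z, g z * v z ∂ψ :=
        backwardOp_le_inv_mul_integral hg hg0 hp hv hv0 x
    _ = ε⁻¹ ^ 2 * (ε * ∫ z, g z * v z ∂ψ) := by field_simp [hp.pos.ne']
    _ ≤ ε⁻¹ ^ 2 * backwardOp ψ g p v x' := by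
        gcongr; exact mul_integral_le_backwardOp hg hg0 hp hv hv0 x'

theorem sq_mul_div_mul_backwardOp_le [IsFiniteMeasure ψ] (hg : IsBoundedMeasurable g)
    (hg0 : ∀ z, 0 ≤ g z) (hp : IsMixingDensity p ε) (hv : IsBoundedMeasurable v)
    (hv0 : ∀ z, 0 ≤ v z) (hIv : 0 < ∫ z, g z * v z ∂ψ) (hw : IsBoundedMeasurable w)
    (hw0 : ∀ z, 0 ≤ w z) (x : X) :
    ε ^ 2 * ((∫ z, g z * w z ∂ψ) / ∫ z, g z * v z ∂ψ) * backwardOp ψ g p v x ≤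
      backwardOp ψ g p w x := by
  have hεv : ε * backwardOp ψ g p v x ≤ ∫ z, g z * v z ∂ψ := by
    have := backwardOp_le_inv_mul_integral (ψ := ψ) hg hg0 hp hv hv0 x
    rwa [← div_eq_inv_mul, le_div_iff₀' hp.pos] at this
  have hIw : 0 ≤ ∫ z, g z * w z ∂ψ := integral_nonneg fun z => mul_nonneg (hg0 z) (hw0 z)
  calc ε ^ 2 * ((∫ z, g z * w z ∂ψ) / ∫ z, g z * v z ∂ψ) * backwardOp ψ g p v x
        = ε * ((∫ z, g z * w z ∂ψ) / ∫ z, g z * v z ∂ψ) * (ε * backwardOp ψ g p v x) := by ring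
    _ ≤ ε * ((∫ z, g z * w z ∂ψ) / ∫ z, g z * v z ∂ψ) * ∫ z, g z * v z ∂ψ := by
        gcongr; exact mul_nonneg hp.pos.le (div_nonneg hIw hIv.le)
    _ = ε * ∫ z, g z * w z ∂ψ := by field_simp
    _ ≤ backwardOp ψ g p w x := mul_integral_le_backwardOp hg hg0 hp hw hw0 x

theorem RatioOscLE.backwardOp [IsFiniteMeasure ψ] (hψ : ψ ≠ 0) (hg : IsBoundedMeasurable g)
    (hgpos : ∀ z, 0 < g z) (hp : IsMixingDensity p ε) (hu : IsBoundedMeasurable u)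
    (hv : IsBoundedMeasurable v) (hvpos : ∀ z, 0 < v z) {δ : ℝ} (h : RatioOscLE δ u v) :
    RatioOscLE ((1 - ε ^ 2) * δ) (backwardOp ψ g p u) (backwardOp ψ g p v) := by
  obtain ⟨a, ha⟩ := h
  have hIv : 0 < ∫ z, g z * v z ∂ψ := integral_pos_of_forall_pos hψ ((hg.mul hv).integrable ψ)
    fun z => mul_pos (hgpos z) (hvpos z)
  set ν := (∫ z, g z * u z ∂ψ) / ∫ z, g z * v z ∂ψ with hν
  have hcomp : ∀ c d : ℝ, (∀ z, 0 ≤ c * u z + d * v z) → ∀ x,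
      ε ^ 2 * (c * ν + d) * _root_.backwardOp ψ g p v x ≤
        c * _root_.backwardOp ψ g p u x + d * _root_.backwardOp ψ g p v x := by
    intro c d hcd x
    have hratio : (∫ z, g z * (c * u z + d * v z) ∂ψ) / ∫ z, g z * v z ∂ψ = c * ν + d := by
      rw [integral_mul_add_mul ((hg.mul hu).integrable ψ) ((hg.mul hv).integrable ψ), hν]
      field_simp
    rw [← hratio, ← backwardOp_const_mul_add_const_mul hg hp hu hv]
    exact sq_mul_div_mul_backwardOp_le hg (fun z => (hgpos z).le) hp hv (fun z => (hvpos z).le)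
      hIv (hu.const_mul_add_const_mul hv c d) hcd x
  refine ⟨a + ε ^ 2 * (ν - a), fun x => ⟨?_, ?_⟩⟩
  · linear_combination hcomp 1 (-a) (fun z => by linarith [(ha z).1]) x
  · linear_combination hcomp (-1) (a + δ) (fun z => by linarith [(ha z).2]) x

end BackwardOperator

section Filter

variable {X : Type*} [MeasurableSpace X] {ψ : Measure X} {p : X → X → ℝ} {ε : ℝ}

theorem integral_backwardOp [IsFiniteMeasure ψ] (η : Measure X) [IsFiniteMeasure η] {g f : X → ℝ}
    (hg : IsBoundedMeasurable g) (hp : IsMixingDensity p ε) (hf : IsBoundedMeasurable f) :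
    ∫ x, backwardOp ψ g p f x ∂η = ∫ z, g z * (∫ x, p x z ∂η) * f z ∂ψ := by
  unfold backwardOp
  rw [integral_integral_swap ((isBoundedMeasurable_kernel hg hp hf).integrable _)]
  congr 1
  ext z
  rw [← integral_const_mul, ← integral_mul_const]

theorem integral_backwardOp_eq_mul_integral_filterStep [IsFiniteMeasure ψ] (η : Measure X)
    [IsFiniteMeasure η] {g f : X → ℝ} (hg : IsBoundedMeasurable g) (hg0 : ∀ z, 0 ≤ g z)
    (hp : IsMixingDensity p ε) (hf : IsBoundedMeasurable f) :
    ∫ x, backwardOp ψ g p f x ∂η =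
      (∫ x, backwardOp ψ g p 1 x ∂η) * ∫ z, f z ∂(filterStep ψ g p η) := by
  have hdens : IsBoundedMeasurable fun z => g z * ∫ x, p x z ∂η :=
    hg.mul ((hp.isBoundedMeasurable.comp measurable_swap).integral_prod_right' η)
  have hdens0 : ∀ z, 0 ≤ g z * ∫ x, p x z ∂η := fun z =>
    mul_nonneg (hg0 z) (integral_nonneg fun x => hp.pos.le.trans (hp.bounds x z).1)
  rw [integral_backwardOp η hg hp hf, integral_backwardOp η hg hp .one]
  simp only [Pi.one_apply, mul_one]
  rw [filterStep,
    integral_mul_integral_normalized_withDensity hdens.measurable hdens0 (hdens.integrable ψ)]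

theorem isFiniteMeasure_filterStep (g : X → ℝ) (η : Measure X) :
    IsFiniteMeasure (filterStep ψ g p η) :=
  isFiniteMeasure_inv_measure_univ_smul _

/-- The operator `U = K_{s+1} ∘ ⋯ ∘ K_n` (identity if `n ≤ s`). -/
noncomputable def backwardIter (ψ : Measure X) (g : ℕ → X → ℝ) (p : X → X → ℝ) (s : ℕ) :
    ℕ → (X → ℝ) → X → ℝ
  | 0 => id
  | n + 1 => if n + 1 ≤ s then id else backwardIter ψ g p s n ∘ backwardOp ψ (g (n + 1)) p

variable {g : ℕ → X → ℝ} {s n : ℕ}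

theorem backwardIter_of_le (h : n ≤ s) : backwardIter ψ g p s n = id := by
  cases n with
  | zero => rfl
  | succ n => simp [backwardIter, h]

theorem backwardIter_succ (h : s ≤ n) :
    backwardIter ψ g p s (n + 1) = backwardIter ψ g p s n ∘ backwardOp ψ (g (n + 1)) p := by
  simp [backwardIter, show ¬n + 1 ≤ s by omega]

theorem filterIter_of_le (h : n ≤ s) : filterIter ψ g p s n = id := by
  cases n with
  | zero => rfl
  | succ n => simp [filterIter, h]

theorem filterIter_succ (h : s ≤ n) :
    filterIter ψ g p s (n + 1) = filterStep ψ (g (n + 1)) p ∘ filterIter ψ g p s n := by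
  simp [filterIter, show ¬n + 1 ≤ s by omega]

theorem isFiniteMeasure_filterIter (ρ : Measure X) [IsFiniteMeasure ρ] (n : ℕ) :
    IsFiniteMeasure (filterIter ψ g p s n ρ) := by
  rcases le_or_gt n s with h | h
  · rwa [filterIter_of_le h]
  · obtain ⟨n, rfl⟩ := Nat.exists_eq_add_of_lt h
    rw [filterIter_succ (by omega)]
    exact isFiniteMeasure_filterStep _ _

theorem backwardIter_invariant {P : (X → ℝ) → Prop}
    (hP : ∀ k f, P f → P (backwardOp ψ (g k) p f)) {f : X → ℝ} (hf : P f) (n : ℕ) :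
    P (backwardIter ψ g p s n f) := by
  induction n generalizing f with
  | zero => exact hf
  | succ n ih =>
    rcases le_or_gt (n + 1) s with h | h
    · rwa [backwardIter_of_le h]
    · rw [backwardIter_succ (by omega)]
      exact ih (hP _ _ hf)

theorem IsBoundedMeasurable.backwardIter [IsFiniteMeasure ψ] {f : X → ℝ}
    (hf : IsBoundedMeasurable f) (hg : ∀ k, IsBoundedMeasurable (g k))
    (hp : IsMixingDensity p ε) (n : ℕ) : IsBoundedMeasurable (backwardIter ψ g p s n f) :=
  backwardIter_invariant (fun k _ h => h.backwardOp (hg k) hp) hf n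

theorem backwardIter_pos [IsFiniteMeasure ψ] (hψ : ψ ≠ 0) (hg : ∀ k, IsBoundedMeasurable (g k))
    (hgpos : ∀ k z, 0 < g k z) (hp : IsMixingDensity p ε) {v : X → ℝ}
    (hv : IsBoundedMeasurable v) (hvpos : ∀ z, 0 < v z) (n : ℕ) (x : X) :
    0 < backwardIter ψ g p s n v x :=
  (backwardIter_invariant (P := fun w => IsBoundedMeasurable w ∧ ∀ z, 0 < w z)
    (fun k _ h => ⟨h.1.backwardOp (hg k) hp, backwardOp_pos hψ (hg k) (hgpos k) hp h.1 h.2⟩)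
    ⟨hv, hvpos⟩ n).2 x

theorem backwardIter_one_le_inv_sq_mul [Nonempty X] [IsFiniteMeasure ψ]
    (hg : ∀ k, IsBoundedMeasurable (g k)) (hg0 : ∀ k z, 0 ≤ g k z) (hp : IsMixingDensity p ε)
    (n : ℕ) (x x' : X) :
    backwardIter ψ g p s n 1 x ≤ ε⁻¹ ^ 2 * backwardIter ψ g p s n 1 x' :=
  (backwardIter_invariant (P := fun w => IsBoundedMeasurable w ∧ (∀ z, 0 ≤ w z) ∧
      ∀ x x', w x ≤ ε⁻¹ ^ 2 * w x')
    (fun k _ h => ⟨h.1.backwardOp (hg k) hp,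
      fun _ => (mul_integral_le_backwardOp (hg k) (hg0 k) hp h.1 h.2.1 _).trans' <|
        mul_nonneg hp.pos.le (integral_nonneg fun z => mul_nonneg (hg0 k z) (h.2.1 z)),
      backwardOp_le_inv_sq_mul (hg k) (hg0 k) hp h.1 h.2.1⟩)
    ⟨.one, fun _ => zero_le_one, fun _ _ => by simpa using hp.one_le_inv_sq⟩ n).2.2 x x'

theorem RatioOscLE.backwardIter [IsFiniteMeasure ψ] (hψ : ψ ≠ 0)
    (hg : ∀ k, IsBoundedMeasurable (g k)) (hgpos : ∀ k z, 0 < g k z) (hp : IsMixingDensity p ε)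
    {u v : X → ℝ} (hu : IsBoundedMeasurable u) (hv : IsBoundedMeasurable v)
    (hvpos : ∀ z, 0 < v z) {δ : ℝ} (h : RatioOscLE δ u v) (n : ℕ) :
    RatioOscLE ((1 - ε ^ 2) ^ (n - s) * δ) (backwardIter ψ g p s n u)
      (backwardIter ψ g p s n v) := by
  induction n generalizing u v δ with
  | zero => simpa [backwardIter_of_le (Nat.zero_le s)] using h
  | succ n ih =>
    rcases le_or_gt (n + 1) s with hns | hns
    · rwa [backwardIter_of_le hns, Nat.sub_eq_zero_of_le hns, pow_zero, one_mul]
    · rw [backwardIter_succ (by omega), show n + 1 - s = n - s + 1 by omega, pow_succ,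
        mul_assoc]
      exact ih (hu.backwardOp (hg _) hp) (hv.backwardOp (hg _) hp)
        (backwardOp_pos hψ (hg _) (hgpos _) hp hv hvpos)
        (h.backwardOp hψ (hg _) (hgpos _) hp hu hv hvpos)

theorem integral_backwardIter_eq_mul_integral_filterIter [IsFiniteMeasure ψ]
    (hg : ∀ k, IsBoundedMeasurable (g k)) (hg0 : ∀ k z, 0 ≤ g k z) (hp : IsMixingDensity p ε)
    (ρ : Measure X) [IsProbabilityMeasure ρ] (n : ℕ) {f : X → ℝ}
    (hf : IsBoundedMeasurable f) :
    ∫ x, backwardIter ψ g p s n f x ∂ρ =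
      (∫ x, backwardIter ψ g p s n 1 x ∂ρ) * ∫ x, f x ∂(filterIter ψ g p s n ρ) := by
  induction n generalizing f with
  | zero => simp [backwardIter_of_le (Nat.zero_le s), filterIter_of_le (Nat.zero_le s)]
  | succ n ih =>
    rcases le_or_gt (n + 1) s with hns | hns
    · simp [backwardIter_of_le hns, filterIter_of_le hns]
    · have := isFiniteMeasure_filterIter (ψ := ψ) (g := g) (p := p) (s := s) ρ n
      have hK : ∀ {f : X → ℝ}, IsBoundedMeasurable f →
          IsBoundedMeasurable (backwardOp ψ (g (n + 1)) p f) := fun hf => hf.backwardOp (hg _) hp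
      rw [backwardIter_succ (by omega), filterIter_succ (by omega), Function.comp_apply,
        Function.comp_apply, Function.comp_apply, ih (hK hf), ih (hK .one),
        integral_backwardOp_eq_mul_integral_filterStep _ (hg _) (hg0 _) hp hf, mul_assoc]

theorem integral_filterIter_eq_div [IsFiniteMeasure ψ] (hψ : ψ ≠ 0)
    (hg : ∀ k, IsBoundedMeasurable (g k)) (hgpos : ∀ k z, 0 < g k z) (hp : IsMixingDensity p ε)
    (ρ : Measure X) [IsProbabilityMeasure ρ] (n : ℕ) {f : X → ℝ}
    (hf : IsBoundedMeasurable f) :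
    ∫ x, f x ∂(filterIter ψ g p s n ρ) =
      (∫ x, backwardIter ψ g p s n f x ∂ρ) / ∫ x, backwardIter ψ g p s n 1 x ∂ρ := by
  rw [integral_backwardIter_eq_mul_integral_filterIter hg (fun k z => (hgpos k z).le) hp ρ n hf,
    mul_div_cancel_left₀]
  exact (integral_pos_of_forall_pos (NeZero.ne ρ)
    ((IsBoundedMeasurable.one.backwardIter hg hp n).integrable ρ)
    (backwardIter_pos hψ hg hgpos hp .one (fun _ => one_pos) n)).ne'

end Filter

theorem filter_stability_mixing_general {X : Type*} [MeasurableSpace X]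
    (ψ : Measure X)
    (p : X → X → ℝ) (hpm : Measurable (Function.uncurry p))
    (ε : ℝ) (hε0 : 0 < ε)
    (hp : ∀ x z, ε ≤ p x z ∧ p x z ≤ ε⁻¹)
    (hpnorm : ∀ x, ∫ z, p x z ∂ψ = 1)
    (g : ℕ → X → ℝ) (hgm : ∀ n, Measurable (g n))
    (hgpos : ∀ n x, 0 < g n x) (hgbd : ∀ n, ∃ B : ℝ, ∀ x, g n x ≤ B)
    (ρ ρ' : Measure X) [IsProbabilityMeasure ρ] [IsProbabilityMeasure ρ']
    (s n : ℕ)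
    (t : ℝ)
    (ht : ∀ f : X → ℝ, Measurable f → (∀ x, |f x| ≤ 1) →
      |(∫ x, f x ∂ρ) - ∫ x, f x ∂ρ'| ≤ t) :
    ∀ f : X → ℝ, Measurable f → (∀ x, |f x| ≤ 1) →
      |(∫ x, f x ∂(filterIter ψ g p s n ρ)) -
          ∫ x, f x ∂(filterIter ψ g p s n ρ')|
        ≤ ε⁻¹ ^ 2 * (1 - ε ^ 2) ^ (n - s) * t := by
  intro f hfm hf1
  obtain ⟨x₀⟩ := nonempty_of_isProbabilityMeasure ρ
  have : Nonempty X := ⟨x₀⟩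
  have hmix : IsMixingDensity p ε := ⟨hpm, hε0, hp⟩
  have : IsFiniteMeasure ψ := isFiniteMeasure_of_le_of_integral_ne_zero hε0
    (fun z => (hp x₀ z).1) (by rw [hpnorm]; exact one_ne_zero)
  have hψ : ψ ≠ 0 := by rintro rfl; simpa using hpnorm x₀
  have hg : ∀ k, IsBoundedMeasurable (g k) := fun k =>
    ⟨hgm k, (hgbd k).imp fun B hB x => (abs_of_pos (hgpos k x)).trans_le (hB x)⟩
  have hf : IsBoundedMeasurable f := ⟨hfm, 1, hf1⟩
  rw [integral_filterIter_eq_div hψ hg hgpos hmix ρ n hf,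
    integral_filterIter_eq_div hψ hg hgpos hmix ρ' n hf]
  calc _ ≤ ε⁻¹ ^ 2 * ((1 - ε ^ 2) ^ (n - s) * 2) / 2 * t :=
        abs_integral_div_sub_integral_div_le ht (hf.backwardIter hg hmix n)
          (IsBoundedMeasurable.one.backwardIter hg hmix n)
          (backwardIter_pos hψ hg hgpos hmix .one (fun _ => one_pos) n)
          (backwardIter_one_le_inv_sq_mul hg (fun k z => (hgpos k z).le) hmix n)
          (.backwardIter hψ hg hgpos hmix hf .one (fun _ => one_pos)
            (ratioOscLE_two_one_of_abs_le_one hf1) n)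
    _ = _ := by ring

/-- Classical filter stability under two-sided mixing: if
`ε ≤ p(x,z) ≤ ε⁻¹`, then the filtering maps contract in total variation,
`‖F_n ⋯ F_{s+1} ρ − F_n ⋯ F_{s+1} ρ'‖ ≤ ε⁻²(1 − ε²)^{n−s} ‖ρ − ρ'‖`. -/
theorem filter_stability_mixing {X : Type*} [MeasurableSpace X]
    (ψ : Measure X) [SigmaFinite ψ]
    (p : X → X → ℝ) (hpm : Measurable (Function.uncurry p))
    (ε : ℝ) (hε0 : 0 < ε) (hε1 : ε ≤ 1)
    (hp : ∀ x z, ε ≤ p x z ∧ p x z ≤ ε⁻¹)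
    (hpnorm : ∀ x, ∫ z, p x z ∂ψ = 1)
    (g : ℕ → X → ℝ) (hgm : ∀ n, Measurable (g n))
    (hgpos : ∀ n x, 0 < g n x) (hgbd : ∀ n, ∃ B : ℝ, ∀ x, g n x ≤ B)
    (ρ ρ' : Measure X) [IsProbabilityMeasure ρ] [IsProbabilityMeasure ρ']
    (s n : ℕ) (hsn : s < n)
    (t : ℝ)
    (ht : ∀ f : X → ℝ, Measurable f → (∀ x, |f x| ≤ 1) →
      |(∫ x, f x ∂ρ) - ∫ x, f x ∂ρ'| ≤ t) :
    ∀ f : X → ℝ, Measurable f → (∀ x, |f x| ≤ 1) →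
      |(∫ x, f x ∂(filterIter ψ g p s n ρ)) -
          ∫ x, f x ∂(filterIter ψ g p s n ρ')|
        ≤ ε⁻¹ ^ 2 * (1 - ε ^ 2) ^ (n - s) * t :=
  filter_stability_mixing_general ψ p hpm ε hε0 hp hpnorm g hgm hgpos hgbd ρ ρ' s n t ht
end
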